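/- arXiv:1802.07633 — 9 statements merged into one kernel-verified Lean document; each statement's English description precedes it below -/
import Mathlib

section
/- Let E be a real topological vector space equipped with a biorthogonal system (e_n)_{n≥1}, (e*_n)_{n≥1}, where (e_n)_{n≥1} is linearly independent. Let X ⊆ E be a non-empty convex subset, let x* ∈ X, and suppose X is qualified at x*. Let f : X → ℝ ∪ {+∞} be a convex function with non-empty domain which is pseudo-semicontinuous on X with respect to x* and which is differentiable at x* in each direction e_n, n ≥ 1. Then f(x*) = inf_{x ∈ X} f(x) if and only if f'(x*; e_n) = 0 for all n ≥ 1. -/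
/-!
If `x*` minimises `f`, qualification lets `x*` move a little along every `± e_n` inside `X`, so
the difference quotients in direction `e_n` are `≥ 0` for `t > 0` and `≤ 0` for `t < 0`.

Conversely, let all `f'(x*; e_n)` vanish and write `v = P^k (x - x*) = ∑_{n<k} c_n e_n`.
Since `x*` is the barycentre of `x* + t v` and of the `k` points `x* - t c_n e_n`, Jensen's
inequality gives `f x* ≤ f (x* + t v) + o(t)`, and convexity on the segment `[x*, x* + v]` gives
`f (x* + t v) ≤ (1 - t) f x* + t f (x* + v)`. Hence `f x* ≤ f (x* + P^k (x - x*))` for every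
`k`, and pseudo-semicontinuity lets `k → ∞`. The convexity arguments are run on the real-valued
function `toReal ∘ f` on the effective domain of `f`.
-/

open Filter Topology

/-- The canonical finite-rank projections `P^k x = ∑_{n<k} ⟨e*_n, x⟩ e_n` associated with a
biorthogonal system `(e_n), (e*_n)`. -/
noncomputable def proj {E : Type*} [AddCommGroup E] [Module ℝ E] [TopologicalSpace E]
    (e : ℕ → E) (estar : ℕ → E →L[ℝ] ℝ) (k : ℕ) (x : E) : E :=
  ∑ n ∈ Finset.range k, estar n x • e n

section Projection

variable {E : Type*} [AddCommGroup E] [Module ℝ E] [TopologicalSpace E]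
  (e : ℕ → E) (estar : ℕ → E →L[ℝ] ℝ)

lemma proj_sub (k : ℕ) (x y : E) :
    proj e estar k (x - y) = proj e estar k x - proj e estar k y := by
  simp [proj, sub_smul, Finset.sum_sub_distrib]

lemma proj_add_smul_of_lt (hbo1 : ∀ n, estar n (e n) = 1)
    (hbo2 : ∀ n m, n ≠ m → estar n (e m) = 0) {n k : ℕ} (h : n < k) (x : E) (s : ℝ) :
    proj e estar k (x + s • e n) = proj e estar k x + s • e n := by
  have hen : ∑ m ∈ Finset.range k, (s * estar m (e n)) • e m = s • e n := by
    rw [Finset.sum_eq_single_of_mem n (Finset.mem_range.2 h) fun m _ hm => by simp [hbo2 m n hm]]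
    simp [hbo1]
  simp only [proj, map_add, map_smul, smul_eq_mul, add_smul, Finset.sum_add_distrib, hen]

lemma eventually_add_smul_mem [IsTopologicalAddGroup E] [ContinuousSMul ℝ E]
    (hbo1 : ∀ n, estar n (e n) = 1) (hbo2 : ∀ n m, n ≠ m → estar n (e m) = 0)
    {X : Set E} {xs : E} {k : ℕ}
    (hqual1 : ∃ U : Set E, IsOpen U ∧ proj e estar k xs ∈ U ∧
      U ∩ Set.range (proj e estar k) ⊆ proj e estar k '' X)
    (hqual2 : ∀ x ∈ X, xs + proj e estar k (x - xs) ∈ X) {n : ℕ} (hn : n < k) :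
    ∀ᶠ s in 𝓝 (0 : ℝ), xs + s • e n ∈ X := by
  obtain ⟨U, hU, hxsU, hsub⟩ := hqual1
  have hcont : Continuous fun s : ℝ => proj e estar k xs + s • e n := by fun_prop
  have hU0 : ∀ᶠ s in 𝓝 (0 : ℝ), proj e estar k xs + s • e n ∈ U :=
    hcont.continuousAt.preimage_mem_nhds (by simpa using hU.mem_nhds hxsU)
  filter_upwards [hU0] with s hs
  rw [← proj_add_smul_of_lt e estar hbo1 hbo2 hn] at hs
  obtain ⟨y, hy, hyeq⟩ := hsub ⟨hs, _, rfl⟩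
  have := hqual2 y hy
  rwa [proj_sub, hyeq, proj_add_smul_of_lt e estar hbo1 hbo2 hn, add_sub_cancel_left] at this

end Projection

section Slope

variable {φ : ℝ → EReal}

lemma ne_top_of_tendsto_slope {a : EReal} {L : ℝ}
    (h : Tendsto (fun t : ℝ => ((t⁻¹ : ℝ) : EReal) * (φ t - a)) (𝓝[≠] 0)
      (𝓝 (L : EReal))) :
    a ≠ ⊤ := by
  rintro rfl
  have hbot :
      Tendsto (fun t : ℝ => ((t⁻¹ : ℝ) : EReal) * (φ t - ⊤)) (𝓝[>] 0) (𝓝 ⊥) :=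
    tendsto_const_nhds.congr' <| eventually_nhdsWithin_of_forall fun t (ht : 0 < t) => by
      dsimp only
      rw [EReal.sub_top, EReal.mul_bot_of_pos (EReal.coe_pos.2 (inv_pos.2 ht))]
  exact EReal.coe_ne_bot L (tendsto_nhds_unique (h.mono_left (nhdsGT_le_nhdsNE 0)) hbot)

lemma eq_zero_of_tendsto_slope_of_le {r L : ℝ} (hmin : ∀ᶠ t in 𝓝 0, (r : EReal) ≤ φ t)
    (h : Tendsto (fun t : ℝ => ((t⁻¹ : ℝ) : EReal) * (φ t - r)) (𝓝[≠] 0)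
      (𝓝 (L : EReal))) :
    L = 0 := by
  have hnn : ∀ᶠ t in 𝓝 0, 0 ≤ φ t - r :=
    hmin.mono fun t ht => (EReal.sub_nonneg (by simp) (by simp)).2 ht
  have hL_nonneg : (0 : EReal) ≤ L := by
    refine ge_of_tendsto (h.mono_left (nhdsGT_le_nhdsNE 0)) ?_
    filter_upwards [self_mem_nhdsWithin, nhdsWithin_le_nhds hnn] with t (ht : 0 < t) hd
    exact EReal.mul_nonneg (EReal.coe_nonneg.2 (inv_pos.2 ht).le) hd
  have hL_nonpos : (L : EReal) ≤ 0 := by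
    refine le_of_tendsto (h.mono_left (nhdsLT_le_nhdsNE 0)) ?_
    filter_upwards [self_mem_nhdsWithin, nhdsWithin_le_nhds hnn] with t (ht : t < 0) hd
    exact EReal.mul_nonpos_iff.2 (Or.inr ⟨EReal.coe_nonpos.2 (inv_lt_zero.2 ht).le, hd⟩)
  exact_mod_cast le_antisymm hL_nonpos hL_nonneg

lemma EReal.le_coe_mul_abs_of_coe_inv_mul_mem_Ioo {c ε : ℝ} (hc : c ≠ 0) {a : EReal}
    (h : ((c⁻¹ : ℝ) : EReal) * a ∈ Set.Ioo ((-ε : ℝ) : EReal) (ε : EReal)) :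
    a ≤ ((ε * |c| : ℝ) : EReal) := by
  induction a using EReal.rec with
  | bot => exact bot_le
  | coe u =>
    rw [← EReal.coe_mul, Set.mem_Ioo, EReal.coe_lt_coe_iff, EReal.coe_lt_coe_iff] at h
    have := abs_lt.2 h
    rw [_root_.abs_mul, abs_inv, inv_mul_lt_iff₀ (abs_pos.2 hc)] at this
    exact_mod_cast (le_abs_self u).trans (this.le.trans_eq (mul_comm _ _))
  | top =>
    rcases hc.lt_or_gt with hneg | hpos
    · simp [EReal.coe_mul_top_of_neg (inv_lt_zero.2 hneg)] at h
    · simp [EReal.coe_mul_top_of_pos (inv_pos.2 hpos)] at h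

lemma eventually_le_add_mul_abs_of_tendsto_slope {r : ℝ} (h0 : φ 0 = r)
    (h : Tendsto (fun t : ℝ => ((t⁻¹ : ℝ) : EReal) * (φ t - r)) (𝓝[≠] 0) (𝓝 0))
    {ε : ℝ} (hε : 0 < ε) : ∀ᶠ t in 𝓝 0, φ t ≤ ((r + ε * |t| : ℝ) : EReal) := by
  have hIoo : Set.Ioo ((-ε : ℝ) : EReal) (ε : EReal) ∈ 𝓝 (0 : EReal) :=
    Ioo_mem_nhds (by exact_mod_cast neg_lt_zero.2 hε) (by exact_mod_cast hε)
  filter_upwards [eventually_nhdsWithin_iff.1 (h hIoo)] with t ht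
  rcases eq_or_ne t 0 with rfl | ht0
  · simp [h0]
  · rw [EReal.coe_add, add_comm]
    exact (EReal.sub_le_iff_le_add (by simp) (by simp)).1
      (EReal.le_coe_mul_abs_of_coe_inv_mul_mem_Ioo ht0 (ht ht0))

end Slope

section Convex

variable {E : Type*} [AddCommGroup E] [Module ℝ E] {D : Set E} {F : E → ℝ}

lemma ConvexOn.le_map_add_sum_add_sum_sub {ι : Type*} (hF : ConvexOn ℝ D F) (s : Finset ι)
    {x : E} {u : ι → E} (hsum : x + ∑ i ∈ s, u i ∈ D) (hsub : ∀ i ∈ s, x - u i ∈ D) :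
    F x ≤ F (x + ∑ i ∈ s, u i) + ∑ i ∈ s, (F (x - u i) - F x) := by
  set m : ℝ := s.card + 1
  have hm : 0 < m := by positivity
  let p : Option ι → E := fun o => o.elim (x + ∑ i ∈ s, u i) (x - u ·)
  have hw : ∑ _ ∈ s.insertNone, m⁻¹ = 1 := by
    simp [Finset.card_insertNone, m, hm.ne']
  have hp : ∀ o ∈ s.insertNone, p o ∈ D := Finset.forall_mem_insertNone.2 ⟨hsum, hsub⟩
  have hbary : ∑ o ∈ s.insertNone, m⁻¹ • p o = x := by
    rw [← Finset.smul_sum, Finset.sum_insertNone]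
    simp only [p, Option.elim, Finset.sum_sub_distrib, Finset.sum_const, m]
    rw [add_add_sub_cancel, ← Nat.cast_smul_eq_nsmul ℝ]
    match_scalars
    field_simp
    ring
  have hjensen := hF.map_sum_le (fun _ _ => (inv_pos.2 hm).le) hw hp
  rw [hbary, ← Finset.smul_sum, Finset.sum_insertNone, smul_eq_mul, le_inv_mul_iff₀ hm]
    at hjensen
  simp only [p, Option.elim, Finset.sum_sub_distrib, Finset.sum_const, nsmul_eq_mul, m]
    at hjensen ⊢
  linarith

lemma ConvexOn.le_map_add_sum_smul {ι : Type*} (hF : ConvexOn ℝ D F) {x : E} (hx : x ∈ D)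
    (s : Finset ι) (c : ι → ℝ) (e : ι → E) (hy : x + ∑ i ∈ s, c i • e i ∈ D)
    (he : ∀ i ∈ s, ∀ ε > 0, ∀ᶠ t in 𝓝 (0 : ℝ),
      x + t • e i ∈ D ∧ F (x + t • e i) ≤ F x + ε * |t|) :
    F x ≤ F (x + ∑ i ∈ s, c i • e i) := by
  set v := ∑ i ∈ s, c i • e i
  set S := ∑ i ∈ s, |c i|
  have hS : 0 ≤ S := Finset.sum_nonneg fun i _ => abs_nonneg _
  refine le_of_forall_pos_le_add fun η hη => ?_
  set ε := η / (S + 1)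
  have hε : 0 < ε := by positivity
  have hεS : ε * S ≤ η := by
    rw [div_mul_eq_mul_div, div_le_iff₀ (by positivity)]
    nlinarith
  have hev : ∀ᶠ t in 𝓝 (0 : ℝ), ∀ i ∈ s, x - (t * c i) • e i ∈ D ∧
      F (x - (t * c i) • e i) ≤ F x + ε * |t * c i| := by
    refine (eventually_all_finset s).2 fun i hi => ?_
    have hlim : Tendsto (fun t : ℝ => -(t * c i)) (𝓝 0) (𝓝 0) :=
      (continuous_id.mul continuous_const).neg.tendsto' 0 0 (by simp)
    filter_upwards [hlim.eventually (he i hi ε hε)] with t ht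
    simpa only [sub_eq_add_neg, neg_smul, abs_neg] using ht
  obtain ⟨t, ⟨hpts, ht0, ht1⟩⟩ :=
    ((hev.filter_mono nhdsWithin_le_nhds).and (Ioc_mem_nhdsGT zero_lt_one)).exists
  have htv : ∑ i ∈ s, (t * c i) • e i = t • v := by
    simp only [v, Finset.smul_sum, smul_smul]
  have hxtv : x + t • v = (1 - t) • x + t • (x + v) := by module
  have hseg : F (x + t • v) ≤ (1 - t) * F x + t * F (x + v) := by
    simpa only [hxtv, smul_eq_mul] using hF.2 hx hy (by linarith) ht0.le (by ring)
  have hjensen := hF.le_map_add_sum_add_sum_sub s (u := fun i => (t * c i) • e i)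
    (by rw [htv, hxtv]; exact hF.1 hx hy (by linarith) ht0.le (by ring))
    (fun i hi => (hpts i hi).1)
  have herr : ∑ i ∈ s, (F (x - (t * c i) • e i) - F x) ≤ t * (ε * S) :=
    calc ∑ i ∈ s, (F (x - (t * c i) • e i) - F x) ≤ ∑ i ∈ s, ε * |t * c i| :=
          Finset.sum_le_sum fun i hi => by linarith [(hpts i hi).2]
      _ = t * (ε * S) := by
          simp only [S, Finset.mul_sum, _root_.abs_mul, abs_of_pos ht0]
          exact Finset.sum_congr rfl fun i _ => by ring
  rw [htv] at hjensen
  nlinarith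

end Convex

section EReal

variable {E : Type*} [AddCommGroup E] [Module ℝ E] {X : Set E} {f : E → EReal}

lemma convexOn_toReal_setOf_ne_top (hX : Convex ℝ X) (hfbot : ∀ x ∈ X, f x ≠ ⊥)
    (hconv : ∀ x ∈ X, ∀ y ∈ X, ∀ a b : ℝ, 0 ≤ a → 0 ≤ b → a + b = 1 →
      f (a • x + b • y) ≤ (a : EReal) * f x + (b : EReal) * f y) :
    ConvexOn ℝ {x ∈ X | f x ≠ ⊤} (fun x => (f x).toReal) := by
  have hcomb : ∀ x ∈ {x ∈ X | f x ≠ ⊤}, ∀ y ∈ {x ∈ X | f x ≠ ⊤}, ∀ a b : ℝ,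
      0 ≤ a → 0 ≤ b → a + b = 1 → a • x + b • y ∈ X ∧
        f (a • x + b • y) ≤ ((a * (f x).toReal + b * (f y).toReal : ℝ) : EReal) := by
    rintro x ⟨hx, hxt⟩ y ⟨hy, hyt⟩ a b ha hb hab
    refine ⟨hX hx hy ha hb hab, ?_⟩
    have hfx := EReal.coe_toReal hxt (hfbot x hx)
    have hfy := EReal.coe_toReal hyt (hfbot y hy)
    calc f (a • x + b • y) ≤ (a : EReal) * f x + (b : EReal) * f y :=
          hconv x hx y hy a b ha hb hab
      _ = _ := by rw [← hfx, ← hfy]; norm_cast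
  refine ⟨fun x hx y hy a b ha hb hab => ?_, fun x hx y hy a b ha hb hab => ?_⟩
  · obtain ⟨hmem, hle⟩ := hcomb x hx y hy a b ha hb hab
    exact ⟨hmem, (hle.trans_lt (EReal.coe_lt_top _)).ne⟩
  · obtain ⟨hmem, hle⟩ := hcomb x hx y hy a b ha hb hab
    exact EReal.coe_le_coe_iff.1 ((EReal.coe_toReal_le (hfbot _ hmem)).trans hle)

lemma le_apply_add_sum_smul_of_flat {ι : Type*} (hX : Convex ℝ X)
    (hfbot : ∀ x ∈ X, f x ≠ ⊥)
    (hconv : ∀ x ∈ X, ∀ y ∈ X, ∀ a b : ℝ, 0 ≤ a → 0 ≤ b → a + b = 1 →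
      f (a • x + b • y) ≤ (a : EReal) * f x + (b : EReal) * f y)
    {x : E} {r : ℝ} (hx : x ∈ X) (hr : f x = r) (s : Finset ι) (c : ι → ℝ) (e : ι → E)
    (hy : x + ∑ i ∈ s, c i • e i ∈ X)
    (he : ∀ i ∈ s, ∀ ε > 0, ∀ᶠ t in 𝓝 (0 : ℝ),
      x + t • e i ∈ X ∧ f (x + t • e i) ≤ ((r + ε * |t| : ℝ) : EReal)) :
    (r : EReal) ≤ f (x + ∑ i ∈ s, c i • e i) := by
  by_cases htop : f (x + ∑ i ∈ s, c i • e i) = ⊤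
  · exact htop ▸ le_top
  have hF := convexOn_toReal_setOf_ne_top hX hfbot hconv
  have hflat : ∀ i ∈ s, ∀ ε > 0, ∀ᶠ t in 𝓝 (0 : ℝ), x + t • e i ∈ {x ∈ X | f x ≠ ⊤} ∧
      (f (x + t • e i)).toReal ≤ (f x).toReal + ε * |t| := fun i hi ε hε =>
    (he i hi ε hε).mono fun t ⟨htX, hle⟩ =>
      ⟨⟨htX, (hle.trans_lt (EReal.coe_lt_top _)).ne⟩,
        hr ▸ EReal.coe_le_coe_iff.1 ((EReal.coe_toReal_le (hfbot _ htX)).trans hle)⟩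
  have := hF.le_map_add_sum_smul ⟨hx, hr ▸ EReal.coe_ne_top r⟩ s c e ⟨hy, htop⟩ hflat
  rw [hr, EReal.toReal_coe] at this
  exact (EReal.coe_le_coe_iff.2 this).trans_eq (EReal.coe_toReal htop (hfbot _ hy))

end EReal

theorem statement0_general {E : Type*} [AddCommGroup E] [Module ℝ E] [TopologicalSpace E]
    [IsTopologicalAddGroup E] [ContinuousSMul ℝ E]
    (e : ℕ → E) (estar : ℕ → E →L[ℝ] ℝ)
    (hbo1 : ∀ n, estar n (e n) = 1)
    (hbo2 : ∀ n m, n ≠ m → estar n (e m) = 0)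
    (X : Set E) (hXconv : Convex ℝ X)
    (xs : E) (hxs : xs ∈ X)
    -- `X` is qualified at `x*` : `P^k x*` is in the interior of `X^k` relative to `E^k`…
    (hqual1 : ∀ k : ℕ, ∃ U : Set E, IsOpen U ∧ proj e estar k xs ∈ U ∧
      U ∩ Set.range (proj e estar k) ⊆ proj e estar k '' X)
    -- …and `P^k (X - x*) ⊆ X - x*`.
    (hqual2 : ∀ k : ℕ, ∀ x ∈ X, xs + proj e estar k (x - xs) ∈ X)
    -- `f : X → ℝ ∪ {+∞}` (it never takes the value `-∞` on `X`) with nonempty domain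
    (f : E → EReal)
    (hfbot : ∀ x ∈ X, f x ≠ ⊥)
    -- `f` is convex on `X`
    (hconv : ∀ x ∈ X, ∀ y ∈ X, ∀ a b : ℝ, 0 ≤ a → 0 ≤ b → a + b = 1 →
      f (a • x + b • y) ≤ (a : EReal) * f x + (b : EReal) * f y)
    -- `f` is pseudo-semicontinuous on `X` with respect to `x*`
    (hpsc : ∀ x ∈ X,
      Filter.limsup (fun k : ℕ => f (xs + proj e estar k (x - xs))) atTop ≤ f x)
    -- `f` is differentiable at `x*` in each direction `e_n`
    (hdiff : ∀ n : ℕ, ∃ L : ℝ,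
      Tendsto (fun t : ℝ => ((t⁻¹ : ℝ) : EReal) * (f (xs + t • e n) - f xs))
        (𝓝[≠] (0 : ℝ)) (𝓝 (L : EReal))) :
    f xs = ⨅ x ∈ X, f x ↔
      ∀ n : ℕ, Tendsto (fun t : ℝ => ((t⁻¹ : ℝ) : EReal) * (f (xs + t • e n) - f xs))
        (𝓝[≠] (0 : ℝ)) (𝓝 (0 : EReal)) := by
  obtain ⟨r, hr⟩ : ∃ r : ℝ, f xs = r := ⟨_, (EReal.coe_toReal
    (ne_top_of_tendsto_slope (hdiff 0).choose_spec) (hfbot xs hxs)).symm⟩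
  have hmem (n : ℕ) : ∀ᶠ t in 𝓝 (0 : ℝ), xs + t • e n ∈ X :=
    eventually_add_smul_mem e estar hbo1 hbo2 (hqual1 (n + 1)) (hqual2 (n + 1)) n.lt_succ_self
  simp only [hr] at hdiff ⊢
  constructor
  · intro hmin n
    obtain ⟨L, hL⟩ := hdiff n
    obtain rfl : L = 0 := eq_zero_of_tendsto_slope_of_le
      ((hmem n).mono fun t ht => hmin ▸ iInf₂_le _ ht) hL
    exact_mod_cast hL
  · intro hzero
    refine le_antisymm (le_iInf₂ fun x hx => ?_) (hr ▸ iInf₂_le xs hxs)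
    have hproj (k : ℕ) : (r : EReal) ≤ f (xs + proj e estar k (x - xs)) :=
      le_apply_add_sum_smul_of_flat hXconv hfbot hconv hxs hr _ _ e (hqual2 k x hx)
        fun n _ ε hε => (hmem n).and
          (eventually_le_add_mul_abs_of_tendsto_slope (by simp [hr]) (hzero n) hε)
    calc (r : EReal) ≤ limsup (fun k => f (xs + proj e estar k (x - xs))) atTop :=
          le_limsup_of_frequently_le (Frequently.of_forall hproj)
      _ ≤ f x := hpsc x hx

/-- **Theorem 1.** Let `E` be a real topological vector space with a biorthogonal system
`(e_n), (e*_n)`, `(e_n)` linearly independent, `X ⊆ E` a nonempty convex set, `x* ∈ X`, and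
suppose `X` is qualified at `x*`.  Let `f : X → ℝ ∪ {+∞}` be convex with nonempty domain,
pseudo-semicontinuous on `X` with respect to `x*`, and differentiable at `x*` in each
direction `e_n`.  Then `f(x*) = inf_X f` iff `f'(x*; e_n) = 0` for all `n`. -/
theorem statement0 {E : Type*} [AddCommGroup E] [Module ℝ E] [TopologicalSpace E]
    [IsTopologicalAddGroup E] [ContinuousSMul ℝ E]
    (e : ℕ → E) (estar : ℕ → E →L[ℝ] ℝ)
    (hbo1 : ∀ n, estar n (e n) = 1)
    (hbo2 : ∀ n m, n ≠ m → estar n (e m) = 0)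
    (hli : LinearIndependent ℝ e)
    (X : Set E) (hXne : X.Nonempty) (hXconv : Convex ℝ X)
    (xs : E) (hxs : xs ∈ X)
    -- `X` is qualified at `x*` : `P^k x*` is in the interior of `X^k` relative to `E^k`…
    (hqual1 : ∀ k : ℕ, ∃ U : Set E, IsOpen U ∧ proj e estar k xs ∈ U ∧
      U ∩ Set.range (proj e estar k) ⊆ proj e estar k '' X)
    -- …and `P^k (X - x*) ⊆ X - x*`.
    (hqual2 : ∀ k : ℕ, ∀ x ∈ X, xs + proj e estar k (x - xs) ∈ X)
    -- `f : X → ℝ ∪ {+∞}` (it never takes the value `-∞` on `X`) with nonempty domain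
    (f : E → EReal)
    (hfbot : ∀ x ∈ X, f x ≠ ⊥)
    (hdom : ∃ x ∈ X, f x ≠ ⊤)
    -- `f` is convex on `X`
    (hconv : ∀ x ∈ X, ∀ y ∈ X, ∀ a b : ℝ, 0 ≤ a → 0 ≤ b → a + b = 1 →
      f (a • x + b • y) ≤ (a : EReal) * f x + (b : EReal) * f y)
    -- `f` is pseudo-semicontinuous on `X` with respect to `x*`
    (hpsc : ∀ x ∈ X,
      Filter.limsup (fun k : ℕ => f (xs + proj e estar k (x - xs))) atTop ≤ f x)
    -- `f` is differentiable at `x*` in each direction `e_n`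
    (hdiff : ∀ n : ℕ, ∃ L : ℝ,
      Tendsto (fun t : ℝ => ((t⁻¹ : ℝ) : EReal) * (f (xs + t • e n) - f xs))
        (𝓝[≠] (0 : ℝ)) (𝓝 (L : EReal))) :
    f xs = ⨅ x ∈ X, f x ↔
      ∀ n : ℕ, Tendsto (fun t : ℝ => ((t⁻¹ : ℝ) : EReal) * (f (xs + t • e n) - f xs))
        (𝓝[≠] (0 : ℝ)) (𝓝 (0 : EReal)) :=
  statement0_general e estar hbo1 hbo2 X hXconv xs hxs hqual1 hqual2 f hfbot hconv hpsc hdiff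
end

section
/- Let E be a Hausdorff real locally convex topological vector space equipped with a biorthogonal system (e_n)_{n≥1}, (e*_n)_{n≥1}, where (e_n)_{n≥1} is a topological basis of E. Let f : E → ℝ be a convex continuous function. Then f is Gâteaux-differentiable at a point x* ∈ E if and only if the directional derivative f'(x*; e_n) exists for every n ≥ 1. In that case, the Gâteaux derivative is given by df(x*)(h) = Σ_{n=1}^{∞} f'(x*; e_n) ⟨e*_n, h⟩ for all h ∈ E. -/
open Filter Topology

/-- `f` has directional derivative `L` at `x` in the direction `h`:
`f'(x; h) := lim_{t→0, t≠0} (f(x + t h) − f(x))/t = L`. -/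
def HasDirDeriv {E : Type*} [AddCommGroup E] [Module ℝ E] (f : E → ℝ) (x h : E) (L : ℝ) : Prop :=
  Tendsto (fun t : ℝ => (f (x + t • h) - f x) / t) (𝓝[≠] (0 : ℝ)) (𝓝 L)

/-- `f` is Gâteaux-differentiable at `x`: there is a continuous linear functional `F` with
`f'(x; h) = F h` for all directions `h`. -/
def GateauxDiffAt {E : Type*} [AddCommGroup E] [Module ℝ E] [TopologicalSpace E]
    (f : E → ℝ) (x : E) : Prop :=
  ∃ F : E →L[ℝ] ℝ, ∀ h : E, HasDirDeriv f x h (F h)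

/-! The one-sided directional derivative `d h = lim_{t → 0+} (f (x* + t h) - f x*) / t` of a
convex function exists in every direction and is sublinear, and `f'(x*; h)` exists iff
`d (-h) = -d h`. The directions with this property form a linear subspace on which `d` is linear;
since `d ≤ f (x* + ·) - f x*`, which is continuous and vanishes at `0`, this subspace is closed.
It contains every `e_n`, hence all of `E`. Then `d` is a linear functional squeezed between
`f x* - f (x* - ·)` and `f (x* + ·) - f x*`, so it is continuous. The series formula is the
continuity of `df(x*)` applied to the basis expansion of `h`, whose coefficients are `⟨e*_n, h⟩`
by biorthogonality. -/

open Filter Topology Set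

section Sublinear

variable {E : Type*} [AddCommGroup E] [Module ℝ E] {N : E → ℝ}

structure IsSublinear (N : E → ℝ) : Prop where
  add_le : ∀ u v, N (u + v) ≤ N u + N v
  smul_of_pos : ∀ c : ℝ, 0 < c → ∀ u, N (c • u) = c * N u

namespace IsSublinear

theorem map_zero (hN : IsSublinear N) : N 0 = 0 := by
  have h := hN.smul_of_pos 2 two_pos 0
  rw [smul_zero] at h
  linarith

theorem add_neg_nonneg (hN : IsSublinear N) (u : E) : 0 ≤ N u + N (-u) := by
  simpa [hN.map_zero] using hN.add_le u (-u)

theorem map_smul_of_map_neg (hN : IsSublinear N) {u : E} (hu : N (-u) = -N u) (c : ℝ) :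
    N (c • u) = c * N u := by
  rcases lt_trichotomy c 0 with hc | rfl | hc
  · rw [← neg_neg c, neg_smul, ← smul_neg, hN.smul_of_pos _ (neg_pos.2 hc), hu]
    ring
  · simp [hN.map_zero]
  · exact hN.smul_of_pos c hc u

theorem map_add_of_map_neg (hN : IsSublinear N) {u v : E} (hu : N (-u) = -N u)
    (hv : N (-v) = -N v) : N (u + v) = N u + N v ∧ N (-(u + v)) = -N (u + v) := by
  have h₁ := hN.add_le u v
  have h₂ := hN.add_le (-u) (-v)
  have h₃ := hN.add_neg_nonneg (u + v)
  rw [← neg_add] at h₂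
  constructor <;> linarith

def linearitySpace (hN : IsSublinear N) : Submodule ℝ E where
  carrier := {u | N (-u) = -N u}
  zero_mem' := by simp [hN.map_zero]
  add_mem' hu hv := (hN.map_add_of_map_neg hu hv).2
  smul_mem' c u (hu : N (-u) = -N u) := by
    change N (-(c • u)) = -N (c • u)
    rw [← neg_smul, hN.map_smul_of_map_neg hu, hN.map_smul_of_map_neg hu]
    ring

@[simp]
theorem mem_linearitySpace (hN : IsSublinear N) {u : E} :
    u ∈ hN.linearitySpace ↔ N (-u) = -N u :=
  Iff.rfl

def toLinearMap (hN : IsSublinear N) (hsymm : ∀ u, N (-u) = -N u) : E →ₗ[ℝ] ℝ where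
  toFun := N
  map_add' u v := (hN.map_add_of_map_neg (hsymm u) (hsymm v)).1
  map_smul' c u := hN.map_smul_of_map_neg (hsymm u) c

theorem isClosed_linearitySpace [TopologicalSpace E] [IsTopologicalAddGroup E]
    (hN : IsSublinear N) {φ : E → ℝ} (hφ : ContinuousAt φ 0) (hφ₀ : φ 0 = 0)
    (hle : ∀ u, N u ≤ φ u) : IsClosed (hN.linearitySpace : Set E) := by
  refine isClosed_of_closure_subset fun u hu => ?_
  have := mem_closure_iff_nhdsWithin_neBot.1 hu
  have hbound : ∀ v ∈ hN.linearitySpace, N u + N (-u) ≤ φ (u - v) + φ (-(u - v)) := by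
    intro v hv
    have h₁ := hN.add_le (u - v) v
    have h₂ := hN.add_le (-(u - v)) (-v)
    rw [sub_add_cancel] at h₁
    rw [← neg_add, sub_add_cancel] at h₂
    have := hle (u - v)
    have := hle (-(u - v))
    rw [mem_linearitySpace] at hv
    linarith
  have hlim : Tendsto (fun v => φ (u - v) + φ (-(u - v))) (𝓝[hN.linearitySpace] u) (𝓝 0) := by
    have hsub : Tendsto (fun v => u - v) (𝓝 u) (𝓝 0) := by
      simpa using (tendsto_const_nhds (x := u)).sub (tendsto_id (x := 𝓝 u))
    have hψ : Tendsto (fun w => φ w + φ (-w)) (𝓝 0) (𝓝 0) := by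
      have := (hφ.add (hφ.comp_of_eq continuous_neg.continuousAt neg_zero)).tendsto
      rwa [Pi.add_apply, Function.comp_apply, neg_zero, hφ₀, add_zero] at this
    exact (hψ.comp hsub).mono_left nhdsWithin_le_nhds
  have := ge_of_tendsto hlim (eventually_nhdsWithin_of_forall hbound)
  rw [SetLike.mem_coe, mem_linearitySpace]
  linarith [hN.add_neg_nonneg u]

end IsSublinear

theorem LinearMap.continuous_of_le [TopologicalSpace E] [IsTopologicalAddGroup E]
    (ℓ : E →ₗ[ℝ] ℝ) {φ : E → ℝ} (hφ : ContinuousAt φ 0) (hφ₀ : φ 0 = 0)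
    (hle : ∀ u, ℓ u ≤ φ u) : Continuous ℓ := by
  refine continuous_of_continuousAt_zero ℓ ?_
  have hlower : Tendsto (fun u => -φ (-u)) (𝓝 0) (𝓝 0) := by
    simpa [hφ₀] using (hφ.comp_of_eq continuous_neg.continuousAt neg_zero).tendsto.neg
  rw [ContinuousAt, map_zero]
  refine tendsto_of_tendsto_of_tendsto_of_le_of_le hlower (hφ₀ ▸ hφ.tendsto) (fun u => ?_) hle
  have := hle (-u)
  rw [map_neg] at this
  linarith

end Sublinear

section DirectionalDerivative

variable {E : Type*} [AddCommGroup E] [Module ℝ E] {f : E → ℝ} {x : E}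

theorem hasDirDeriv_iff_hasDerivAt {h : E} {L : ℝ} :
    HasDirDeriv f x h L ↔ HasDerivAt (fun t : ℝ => f (x + t • h)) L 0 := by
  rw [hasDerivAt_iff_tendsto_slope, HasDirDeriv]
  refine tendsto_congr fun t => ?_
  simp [slope_def_field]

noncomputable def rightDirDeriv (f : E → ℝ) (x h : E) : ℝ :=
  derivWithin (fun t : ℝ => f (x + t • h)) (Ioi 0) 0

theorem rightDirDeriv_neg (h : E) :
    rightDirDeriv f x (-h) = -derivWithin (fun t : ℝ => f (x + t • h)) (Iio 0) 0 := by
  have := derivWithin_comp_neg (fun t : ℝ => f (x + t • h)) (Ioi 0) 0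
  rw [neg_zero, neg_Ioi, neg_zero] at this
  rw [rightDirDeriv, ← this]
  simp only [smul_neg, neg_smul]

namespace ConvexOn

variable (hf : ConvexOn ℝ univ f)
include hf

theorem comp_line (x h : E) : ConvexOn ℝ univ (fun t : ℝ => f (x + t • h)) :=
  (hf.translate_right x).comp_linearMap (LinearMap.toSpanSingleton ℝ E h)

theorem hasDerivWithinAt_rightDirDeriv (x h : E) :
    HasDerivWithinAt (fun t : ℝ => f (x + t • h)) (rightDirDeriv f x h) (Ioi 0) 0 :=
  (hf.comp_line x h).hasDerivWithinAt_rightDeriv_of_mem_interior (by simp)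

theorem hasDirDeriv_iff {h : E} {L : ℝ} :
    HasDirDeriv f x h L ↔ rightDirDeriv f x h = L ∧ rightDirDeriv f x (-h) = -L := by
  rw [hasDirDeriv_iff_hasDerivAt, hasDerivAt_iff_tendsto_slope_left_right,
    ← hasDerivWithinAt_iff_tendsto_slope' self_notMem_Iio,
    ← hasDerivWithinAt_iff_tendsto_slope' self_notMem_Ioi, rightDirDeriv_neg, neg_inj]
  constructor
  · rintro ⟨hleft, hright⟩
    exact ⟨hright.derivWithin (uniqueDiffWithinAt_Ioi 0),
      hleft.derivWithin (uniqueDiffWithinAt_Iio 0)⟩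
  · rintro ⟨hright, hleft⟩
    refine ⟨hleft ▸ ?_, hright ▸ hf.hasDerivWithinAt_rightDirDeriv x h⟩
    exact (hf.comp_line x h).hasDerivWithinAt_leftDeriv_of_mem_interior (by simp)

theorem rightDirDeriv_le_sub (x h : E) : rightDirDeriv f x h ≤ f (x + h) - f x := by
  simpa [rightDirDeriv, slope_def_field] using
    (hf.comp_line x h).rightDeriv_le_slope_of_mem_interior (x := 0) (by simp) (mem_univ 1) one_pos

theorem rightDirDeriv_smul_of_pos (x h : E) {c : ℝ} (hc : 0 < c) :
    rightDirDeriv f x (c • h) = c * rightDirDeriv f x h := by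
  have hscale : HasDerivWithinAt (fun t : ℝ => c * t) c (Ioi 0) 0 := by
    simpa using (hasDerivWithinAt_id (0 : ℝ) (Ioi 0)).const_mul c
  have hmaps : MapsTo (fun t : ℝ => c * t) (Ioi 0) (Ioi 0) := fun t ht => mul_pos hc ht
  have := (hf.hasDerivWithinAt_rightDirDeriv x h).scomp_of_eq 0 hscale hmaps (mul_zero c).symm
  rw [← smul_eq_mul, ← this.derivWithin (uniqueDiffWithinAt_Ioi 0), rightDirDeriv]
  congr 1 with t
  simp [smul_smul, mul_comm]

theorem tendsto_rightDirDeriv (x h : E) :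
    Tendsto (fun t : ℝ => (f (x + t • h) - f x) / t) (𝓝[>] 0) (𝓝 (rightDirDeriv f x h)) := by
  have := (hasDerivWithinAt_iff_tendsto_slope' self_notMem_Ioi).1
    (hf.hasDerivWithinAt_rightDirDeriv x h)
  refine this.congr fun t => ?_
  simp [slope_def_field]

theorem rightDirDeriv_add_le (x a b : E) :
    rightDirDeriv f x (a + b) ≤ rightDirDeriv f x a + rightDirDeriv f x b := by
  have hquot : ∀ t > (0 : ℝ), (f (x + t • (a + b)) - f x) / t ≤
      2⁻¹ * ((f (x + t • (2 : ℝ) • a) - f x) / t) +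
        2⁻¹ * ((f (x + t • (2 : ℝ) • b) - f x) / t) := by
    intro t ht
    have hmid := hf.2 (mem_univ (x + t • (2 : ℝ) • a)) (mem_univ (x + t • (2 : ℝ) • b))
      (inv_nonneg.2 zero_le_two) (inv_nonneg.2 zero_le_two) (by norm_num)
    have hpt : (2⁻¹ : ℝ) • (x + t • (2 : ℝ) • a) + (2⁻¹ : ℝ) • (x + t • (2 : ℝ) • b) =
        x + t • (a + b) := by module
    rw [hpt, smul_eq_mul, smul_eq_mul] at hmid
    rw [← mul_div_assoc, ← mul_div_assoc, ← add_div]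
    exact div_le_div_of_nonneg_right (by linarith) ht.le
  have hlim := ((hf.tendsto_rightDirDeriv x ((2 : ℝ) • a)).const_mul 2⁻¹).add
    ((hf.tendsto_rightDirDeriv x ((2 : ℝ) • b)).const_mul 2⁻¹)
  rw [hf.rightDirDeriv_smul_of_pos x a two_pos, hf.rightDirDeriv_smul_of_pos x b two_pos,
    ← mul_add, ← mul_add, inv_mul_cancel_left₀ two_ne_zero] at hlim
  exact le_of_tendsto_of_tendsto (hf.tendsto_rightDirDeriv x (a + b)) hlim
    (eventually_nhdsWithin_of_forall hquot)

theorem isSublinear_rightDirDeriv (x : E) : IsSublinear (rightDirDeriv f x) :=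
  ⟨hf.rightDirDeriv_add_le x, fun _ hc h => hf.rightDirDeriv_smul_of_pos x h hc⟩

end ConvexOn

end DirectionalDerivative

section Biorthogonal

variable {E : Type*} [AddCommGroup E] [Module ℝ E] [TopologicalSpace E]
  {e : ℕ → E} {estar : ℕ → E →L[ℝ] ℝ}

theorem coeff_eq_of_tendsto_of_biorthogonal (hbo1 : ∀ n, estar n (e n) = 1)
    (hbo2 : ∀ n m, n ≠ m → estar n (e m) = 0) {a : ℕ → ℝ} {h : E}
    (ha : Tendsto (fun k : ℕ => ∑ n ∈ Finset.range k, a n • e n) atTop (𝓝 h)) (m : ℕ) :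
    a m = estar m h := by
  have hcoeff : ∀ k > m, estar m (∑ n ∈ Finset.range k, a n • e n) = a m := by
    intro k hk
    rw [map_sum, Finset.sum_eq_single_of_mem m (Finset.mem_range.2 hk)]
    · simp [hbo1]
    · intro n _ hn
      simp [hbo2 m n hn.symm]
  refine tendsto_nhds_unique ?_ (((estar m).continuous.tendsto h).comp ha)
  exact tendsto_const_nhds.congr' ((eventually_gt_atTop m).mono fun k hk => (hcoeff k hk).symm)

theorem ContinuousLinearMap.tendsto_sum_apply_mul_of_biorthogonal (F : E →L[ℝ] ℝ)
    (hbo1 : ∀ n, estar n (e n) = 1) (hbo2 : ∀ n m, n ≠ m → estar n (e m) = 0)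
    {a : ℕ → ℝ} {h : E}
    (ha : Tendsto (fun k : ℕ => ∑ n ∈ Finset.range k, a n • e n) atTop (𝓝 h)) :
    Tendsto (fun K : ℕ => ∑ n ∈ Finset.range K, F (e n) * estar n h) atTop (𝓝 (F h)) := by
  refine ((F.continuous.tendsto h).comp ha).congr fun k => ?_
  simp [coeff_eq_of_tendsto_of_biorthogonal hbo1 hbo2 ha, mul_comm]

end Biorthogonal

theorem statement1_general {E : Type*} [AddCommGroup E] [Module ℝ E] [TopologicalSpace E]
    [IsTopologicalAddGroup E]
    (e : ℕ → E) (estar : ℕ → E →L[ℝ] ℝ)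
    (hbo1 : ∀ n, estar n (e n) = 1)
    (hbo2 : ∀ n m, n ≠ m → estar n (e m) = 0)
    -- `(e_n)` is a topological basis of `E`
    (hbasis : ∀ x : E, ∃! a : ℕ → ℝ,
      Tendsto (fun k : ℕ => ∑ n ∈ Finset.range k, a n • e n) atTop (𝓝 x))
    (f : E → ℝ) (hconv : ConvexOn ℝ Set.univ f) (hcont : Continuous f)
    (xs : E) :
    (GateauxDiffAt f xs ↔ ∀ n : ℕ, ∃ L : ℝ, HasDirDeriv f xs (e n) L) ∧
      (∀ F : E →L[ℝ] ℝ, (∀ h : E, HasDirDeriv f xs h (F h)) →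
        ∀ h : E, Tendsto (fun K : ℕ => ∑ n ∈ Finset.range K, F (e n) * estar n h)
          atTop (𝓝 (F h))) := by
  refine ⟨⟨fun ⟨F, hF⟩ n => ⟨F (e n), hF (e n)⟩, fun hdir => ?_⟩, fun F _ h => ?_⟩
  · have hN := hconv.isSublinear_rightDirDeriv xs
    have hφ : ContinuousAt (fun u => f (xs + u) - f xs) 0 := by fun_prop
    have hle := hconv.rightDirDeriv_le_sub xs
    have hspan : Submodule.span ℝ (range e) ≤ hN.linearitySpace := by
      refine Submodule.span_le.2 (range_subset_iff.2 fun n => ?_)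
      obtain ⟨L, hL⟩ := hdir n
      obtain ⟨hL₁, hL₂⟩ := hconv.hasDirDeriv_iff.1 hL
      rw [SetLike.mem_coe, hN.mem_linearitySpace, hL₁, hL₂]
    have hsymm : ∀ u, rightDirDeriv f xs (-u) = -rightDirDeriv f xs u := by
      intro u
      obtain ⟨a, ha, -⟩ := hbasis u
      refine closure_minimal hspan (hN.isClosed_linearitySpace hφ (by simp) hle)
        (mem_closure_of_tendsto ha (Eventually.of_forall fun k => ?_))
      exact Submodule.sum_mem _ fun n _ => Submodule.smul_mem _ _ (Submodule.subset_span ⟨n, rfl⟩)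
    let F := hN.toLinearMap hsymm
    exact ⟨⟨F, F.continuous_of_le hφ (by simp) hle⟩,
      fun h => hconv.hasDirDeriv_iff.2 ⟨rfl, hsymm h⟩⟩
  · obtain ⟨a, ha, -⟩ := hbasis h
    exact F.tendsto_sum_apply_mul_of_biorthogonal hbo1 hbo2 ha

/-- **Theorem 2.** Let `E` be a Hausdorff real locally convex topological vector space with a
biorthogonal system `(e_n), (e*_n)` where `(e_n)` is a topological basis, and let `f : E → ℝ`
be convex and continuous.  Then `f` is Gâteaux-differentiable at `x*` iff `f'(x*; e_n)` exists
for every `n`; and in that case `df(x*)(h) = ∑_{n} f'(x*; e_n) ⟨e*_n, h⟩` for all `h`. -/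
theorem statement1 {E : Type*} [AddCommGroup E] [Module ℝ E] [TopologicalSpace E]
    [IsTopologicalAddGroup E] [ContinuousSMul ℝ E] [T2Space E] [LocallyConvexSpace ℝ E]
    (e : ℕ → E) (estar : ℕ → E →L[ℝ] ℝ)
    (hbo1 : ∀ n, estar n (e n) = 1)
    (hbo2 : ∀ n m, n ≠ m → estar n (e m) = 0)
    -- `(e_n)` is a topological basis of `E`
    (hbasis : ∀ x : E, ∃! a : ℕ → ℝ,
      Tendsto (fun k : ℕ => ∑ n ∈ Finset.range k, a n • e n) atTop (𝓝 x))
    (f : E → ℝ) (hconv : ConvexOn ℝ Set.univ f) (hcont : Continuous f)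
    (xs : E) :
    (GateauxDiffAt f xs ↔ ∀ n : ℕ, ∃ L : ℝ, HasDirDeriv f xs (e n) L) ∧
      (∀ F : E →L[ℝ] ℝ, (∀ h : E, HasDirDeriv f xs h (F h)) →
        ∀ h : E, Tendsto (fun K : ℕ => ∑ n ∈ Finset.range K, F (e n) * estar n h)
          atTop (𝓝 (F h))) :=
  statement1_general e estar hbo1 hbo2 hbasis f hconv hcont xs
end

section
/- Let (E, ‖·‖) be a real Banach space with a Schauder basis (e_n)_{n≥1} and associated biorthogonal system (e_n)_{n≥1}, (e*_n)_{n≥1}. For each n ≥ 1 let u_n : ℝ → ℝ be a convex function, and suppose that the series Σ_{n=1}^{∞} u_n(⟨e*_n, x⟩) converges for every x ∈ E. Define f : E → ℝ by f(x) = Σ_{n=1}^{∞} u_n(⟨e*_n, x⟩). Then f is Gâteaux-differentiable at a point x ∈ E if and only if u_n is differentiable at ⟨e*_n, x⟩ for every n ≥ 1. -/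
open Filter Topology

lemma slope_mono0 {v : ℝ → ℝ} (hv : ConvexOn ℝ Set.univ v) {s t : ℝ}
    (hs : s ≠ 0) (ht : t ≠ 0) (hst : s ≤ t) :
    (v s - v 0) / s ≤ (v t - v 0) / t := by
  simpa using hv.secant_mono (Set.mem_univ 0) (Set.mem_univ s) (Set.mem_univ t) hs ht hst

lemma slope_tendsto0 {v : ℝ → ℝ} {c : ℝ} (hc : HasDerivAt v c 0) :
    Tendsto (fun s : ℝ => (v s - v 0) / s) (𝓝[≠] (0:ℝ)) (𝓝 c) := by
  have := hasDerivAt_iff_tendsto_slope.mp hc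
  exact this.congr (fun s => by simp [slope_def_field, div_eq_inv_mul])

lemma deriv_le_slope {v : ℝ → ℝ} (hv : ConvexOn ℝ Set.univ v) {c : ℝ}
    (hc : HasDerivAt v c 0) {t : ℝ} (ht : 0 < t) :
    c ≤ (v t - v 0) / t := by
  have h1 : Tendsto (fun s : ℝ => (v s - v 0) / s) (𝓝[>] 0) (𝓝 c) :=
    (slope_tendsto0 hc).mono_left (nhdsWithin_mono _ (fun s hs => ne_of_gt hs))
  refine le_of_tendsto h1 ?_
  filter_upwards [self_mem_nhdsWithin, Ioo_mem_nhdsGT ht] with s hs1 hs2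
  exact slope_mono0 hv (ne_of_gt hs1) (ne_of_gt ht) (le_of_lt hs2.2)

lemma slope_le_deriv {v : ℝ → ℝ} (hv : ConvexOn ℝ Set.univ v) {c : ℝ}
    (hc : HasDerivAt v c 0) {t : ℝ} (ht : t < 0) :
    (v t - v 0) / t ≤ c := by
  have h1 : Tendsto (fun s : ℝ => (v s - v 0) / s) (𝓝[<] 0) (𝓝 c) :=
    (slope_tendsto0 hc).mono_left (nhdsWithin_mono _ (fun s hs => ne_of_lt hs))
  refine ge_of_tendsto h1 ?_
  filter_upwards [self_mem_nhdsWithin, Ioo_mem_nhdsLT ht] with s hs1 hs2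
  exact slope_mono0 hv (ne_of_lt ht) (ne_of_lt hs1) (le_of_lt hs2.1)

lemma core (v : ℕ → ℝ → ℝ) (hv : ∀ n, ConvexOn ℝ Set.univ (v n))
    (c : ℕ → ℝ) (hc : ∀ n, HasDerivAt (v n) (c n) 0)
    (g : ℝ → ℝ)
    (hg : ∀ t, Tendsto (fun K => ∑ n ∈ Finset.range K, v n t) atTop (𝓝 (g t))) :
    ∃ L : ℝ, Tendsto (fun K => ∑ n ∈ Finset.range K, c n) atTop (𝓝 L) ∧
      Tendsto (fun t => (g t - g 0) / t) (𝓝[≠] (0:ℝ)) (𝓝 L) := by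
  set q : ℕ → ℝ → ℝ := fun n t => (v n t - v n 0) / t with hqdef
  set Q : ℝ → ℝ := fun t => (g t - g 0) / t with hQdef
  have hQ : ∀ t : ℝ, Tendsto (fun K => ∑ n ∈ Finset.range K, q n t) atTop (𝓝 (Q t)) := by
    intro t
    have heq : (fun K => ∑ n ∈ Finset.range K, q n t)
        = fun K => ((∑ n ∈ Finset.range K, v n t) - (∑ n ∈ Finset.range K, v n 0)) / t := by
      funext K; rw [← Finset.sum_sub_distrib, Finset.sum_div]
    rw [heq]
    exact ((hg t).sub (hg 0)).div_const t
  have hub : ∀ n, c n ≤ q n 1 := fun n => deriv_le_slope (hv n) (hc n) one_pos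
  have hlb : ∀ n, q n (-1) ≤ c n := fun n => slope_le_deriv (hv n) (hc n) (by norm_num)
  set d : ℕ → ℝ := fun n => q n 1 - q n (-1) with hddef
  have hd0 : ∀ n, 0 ≤ d n := fun n => sub_nonneg.mpr ((hlb n).trans (hub n))
  have hDQ : Tendsto (fun K => ∑ n ∈ Finset.range K, d n) atTop (𝓝 (Q 1 - Q (-1))) := by
    have := (hQ 1).sub (hQ (-1))
    simpa [← Finset.sum_sub_distrib] using this
  have hdsum : Summable d := by
    apply summable_of_sum_range_le hd0
    intro K
    refine Monotone.ge_of_tendsto ?_ hDQ K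
    intro i j hij
    exact Finset.sum_le_sum_of_subset_of_nonneg (Finset.range_subset_range.mpr hij)
      (fun n _ _ => hd0 n)
  set a : ℕ → ℝ := fun n => c n - q n (-1) with hadef
  have ha0 : ∀ n, 0 ≤ a n := fun n => sub_nonneg.mpr (hlb n)
  have hasum : Summable a := hdsum.of_nonneg_of_le ha0
    (fun n => sub_le_sub_right (hub n) _)
  set L : ℝ := (∑' n, a n) + Q (-1) with hLdef
  have hL : Tendsto (fun K => ∑ n ∈ Finset.range K, c n) atTop (𝓝 L) := by
    have h1 := hasum.hasSum.tendsto_sum_nat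
    have h2 := h1.add (hQ (-1))
    refine h2.congr (fun K => ?_)
    rw [← Finset.sum_add_distrib]
    exact Finset.sum_congr rfl (fun n _ => by simp [hadef])
  refine ⟨L, hL, ?_⟩
  -- per-n bound on |q n t - c n| for t ∈ [-1,1] \ {0}
  have hqd : ∀ n, ∀ t : ℝ, t ≠ 0 → -1 ≤ t → t ≤ 1 → |q n t - c n| ≤ d n := by
    intro n t ht h1 h2
    rcases ht.lt_or_gt with htneg | htpos
    · have e1 : q n (-1) ≤ q n t := slope_mono0 (hv n) (by norm_num) ht h1
      have e2 : q n t ≤ c n := slope_le_deriv (hv n) (hc n) htneg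
      rw [abs_le]
      constructor <;> [skip; skip] <;> simp only [hddef] <;> nlinarith [hub n, hlb n]
    · have e1 : q n t ≤ q n 1 := slope_mono0 (hv n) ht one_ne_zero h2
      have e2 : c n ≤ q n t := deriv_le_slope (hv n) (hc n) htpos
      rw [abs_le]
      constructor <;> [skip; skip] <;> simp only [hddef] <;> nlinarith [hub n, hlb n]
  rw [Metric.tendsto_nhds]
  intro ε hε
  -- choose N with small tail
  obtain ⟨N, hN⟩ : ∃ N, ∑' k, d (k + N) < ε / 4 := by
    have htail := hdsum.hasSum.tendsto_sum_nat
    have h5 : Tendsto (fun K => (∑' n, d n) - ∑ n ∈ Finset.range K, d n) atTop (𝓝 0) := by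
      have := htail.const_sub (∑' n, d n)
      simpa using this
    have h6 : ∀ᶠ K in atTop, (∑' n, d n) - ∑ n ∈ Finset.range K, d n < ε / 4 :=
      h5.eventually (eventually_lt_nhds (by positivity : (0:ℝ) < ε/4))
    obtain ⟨N, hN⟩ := h6.exists
    refine ⟨N, ?_⟩
    have h7 := Summable.sum_add_tsum_nat_add (f := d) N hdsum
    linarith [h7]
  set A : ℝ → ℝ := fun t => ∑ n ∈ Finset.range N, (q n t - c n) with hAdef
  have hA : Tendsto A (𝓝[≠] (0:ℝ)) (𝓝 0) := by
    have : Tendsto (fun t => ∑ n ∈ Finset.range N, (q n t - c n)) (𝓝[≠] (0:ℝ))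
        (𝓝 (∑ n ∈ Finset.range N, (0:ℝ))) := by
      refine tendsto_finset_sum _ (fun n _ => ?_)
      have := (slope_tendsto0 (hc n)).sub_const (c n)
      simpa using this
    simpa only [Finset.sum_const_zero] using this
  -- main estimate: for admissible t, |Q t - L - A t| ≤ tail
  have hmain : ∀ t : ℝ, t ≠ 0 → -1 ≤ t → t ≤ 1 → |Q t - L - A t| ≤ ∑' k, d (k + N) := by
    intro t ht h1 h2
    have hpt : Tendsto (fun K => |(∑ n ∈ Finset.range K, (q n t - c n)) - A t|) atTop
        (𝓝 (|Q t - L - A t|)) := by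
      have h3 : Tendsto (fun K => ∑ n ∈ Finset.range K, (q n t - c n)) atTop (𝓝 (Q t - L)) := by
        have := (hQ t).sub hL
        simpa [← Finset.sum_sub_distrib] using this
      exact ((h3.sub_const (A t)).abs)
    refine le_of_tendsto hpt ?_
    filter_upwards [eventually_ge_atTop N] with K hK
    have hsplit : (∑ n ∈ Finset.range K, (q n t - c n)) - A t
        = ∑ n ∈ Finset.Ico N K, (q n t - c n) := by
      rw [hAdef]
      rw [Finset.sum_Ico_eq_sub _ hK]
    rw [hsplit]
    calc |∑ n ∈ Finset.Ico N K, (q n t - c n)| ≤ ∑ n ∈ Finset.Ico N K, |q n t - c n| :=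
          Finset.abs_sum_le_sum_abs _ _
      _ ≤ ∑ n ∈ Finset.Ico N K, d n :=
          Finset.sum_le_sum (fun n _ => hqd n t ht h1 h2)
      _ = ∑ i ∈ Finset.range (K - N), d (N + i) := by rw [Finset.sum_Ico_eq_sum_range]
      _ = ∑ i ∈ Finset.range (K - N), d (i + N) := by
          exact Finset.sum_congr rfl (fun i _ => by rw [Nat.add_comm])
      _ ≤ ∑' k, d (k + N) := by
          refine Summable.sum_le_tsum _ (fun i _ => hd0 _) ?_
          exact (summable_nat_add_iff N).mpr hdsum
  -- conclude
  have hAsmall : ∀ᶠ t in 𝓝[≠] (0:ℝ), |A t| < ε / 4 := by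
    have := hA.eventually (eventually_abs_sub_lt 0 (by positivity : (0:ℝ) < ε/4))
    simpa using this
  have hIcc : ∀ᶠ t in 𝓝[≠] (0:ℝ), t ∈ Set.Icc (-1 : ℝ) 1 := by
    refine eventually_nhdsWithin_of_eventually_nhds ?_
    filter_upwards [Icc_mem_nhds (show (-1:ℝ) < 0 by norm_num) (show (0:ℝ) < 1 by norm_num)]
      with t ht using ht
  filter_upwards [hAsmall, hIcc, self_mem_nhdsWithin] with t hAt hIt htne
  have h1 := hmain t htne hIt.1 hIt.2
  have : |Q t - L| ≤ |Q t - L - A t| + |A t| := by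
    calc |Q t - L| = |(Q t - L - A t) + A t| := by rw [sub_add_cancel]
      _ ≤ |Q t - L - A t| + |A t| := abs_add_le _ _
  rw [Real.dist_eq]
  calc |Q t - L| ≤ |Q t - L - A t| + |A t| := this
    _ < ε/4 + ε/4 := by linarith [hN, hAt, h1]
    _ < ε := by linarith

/-- **Proposition 3.** Let `E` be a real Banach space with a Schauder basis `(e_n)` and
associated biorthogonal system `(e_n), (e*_n)`.  For convex functions `u_n : ℝ → ℝ` such that
`∑ u_n(⟨e*_n, x⟩)` converges for each `x`, the function `f x = ∑ u_n(⟨e*_n, x⟩)` is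
Gâteaux-differentiable at `x` iff each `u_n` is differentiable at `⟨e*_n, x⟩`. -/
theorem statement6 {E : Type*} [NormedAddCommGroup E] [NormedSpace ℝ E] [CompleteSpace E]
    (e : ℕ → E) (estar : ℕ → E →L[ℝ] ℝ)
    (hbo1 : ∀ n, estar n (e n) = 1)
    (hbo2 : ∀ n m, n ≠ m → estar n (e m) = 0)
    -- `(e_n)` is a Schauder basis, with coordinate functionals the `e*_n`
    (hbasis : ∀ x : E, ∃! a : ℕ → ℝ,
      Tendsto (fun k : ℕ => ∑ n ∈ Finset.range k, a n • e n) atTop (𝓝 x))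
    (hrepr : ∀ x : E,
      Tendsto (fun k : ℕ => ∑ n ∈ Finset.range k, estar n x • e n) atTop (𝓝 x))
    (u : ℕ → ℝ → ℝ) (hu : ∀ n, ConvexOn ℝ Set.univ (u n))
    -- the series `∑ u_n (⟨e*_n, x⟩)` converges for each `x ∈ E`, with sum `f x`
    (f : E → ℝ)
    (hf : ∀ x : E,
      Tendsto (fun K : ℕ => ∑ n ∈ Finset.range K, u n (estar n x)) atTop (𝓝 (f x)))
    (x : E) :
    GateauxDiffAt f x ↔ ∀ n : ℕ, DifferentiableAt ℝ (u n) (estar n x) := by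
  constructor
  · rintro ⟨F, hF⟩ n
    set a : ℝ := estar n x with hadef
    have key : ∀ t : ℝ, f (x + t • e n) - f x = u n (a + t) - u n a := by
      intro t
      have h3 := (hf (x + t • e n)).sub (hf x)
      have h4 : (fun K => (∑ m ∈ Finset.range K, u m (estar m (x + t • e n)))
          - ∑ m ∈ Finset.range K, u m (estar m x))
          =ᶠ[atTop] (fun _ => u n (a + t) - u n a) := by
        filter_upwards [eventually_ge_atTop (n + 1)] with K hK
        rw [← Finset.sum_sub_distrib]
        rw [Finset.sum_eq_single_of_mem n (Finset.mem_range.mpr (by omega))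
          (fun m _ hmn => by simp [map_add, map_smul, hbo2 m n hmn])]
        have h6 : estar n (x + t • e n) = a + t := by
          simp [map_add, map_smul, hbo1 n, hadef]
        rw [h6]
      have h5 := Filter.Tendsto.congr' h4 h3
      exact tendsto_nhds_unique h5 tendsto_const_nhds
    have h6 : Tendsto (fun t : ℝ => (u n (a + t) - u n a) / t) (𝓝[≠] (0:ℝ)) (𝓝 (F (e n))) :=
      (hF (e n)).congr (fun t => by rw [key t])
    have h7 : HasDerivAt (u n) (F (e n)) a := by
      rw [hasDerivAt_iff_tendsto_slope_zero]
      exact h6.congr (fun t => by rw [smul_eq_mul, ← div_eq_inv_mul])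
    exact h7.differentiableAt
  · intro hd
    set c : ℕ → ℝ := fun n => deriv (u n) (estar n x) with hcdef
    have hder : ∀ n, HasDerivAt (u n) (c n) (estar n x) := fun n => (hd n).hasDerivAt
    have main : ∀ h : E, ∃ L : ℝ,
        Tendsto (fun K => ∑ n ∈ Finset.range K, c n * estar n h) atTop (𝓝 L) ∧
        Tendsto (fun t : ℝ => (f (x + t • h) - f x) / t) (𝓝[≠] (0:ℝ)) (𝓝 L) := by
      intro h
      set v : ℕ → ℝ → ℝ := fun n t => u n (estar n x + t * estar n h) with hvdef
      have hvc : ∀ n, ConvexOn ℝ Set.univ (v n) := by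
        intro n
        have h1 := (hu n).comp_affineMap
          (AffineMap.lineMap (estar n x) (estar n x + estar n h) : ℝ →ᵃ[ℝ] ℝ)
        have h2 : v n = (u n) ∘ (AffineMap.lineMap (estar n x) (estar n x + estar n h) : ℝ →ᵃ[ℝ] ℝ) := by
          funext t
          show u n _ = u n _
          congr 1
          simp [AffineMap.lineMap_apply]
          ring
        rw [h2]
        simpa using h1
      have hvd : ∀ n, HasDerivAt (v n) (c n * estar n h) 0 := by
        intro n
        have hi : HasDerivAt (fun t : ℝ => estar n x + t * estar n h) (1 * estar n h) 0 :=
          ((hasDerivAt_id (0:ℝ)).mul_const (estar n h)).const_add (estar n x)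
        have hu0 : HasDerivAt (u n) (c n) ((fun t : ℝ => estar n x + t * estar n h) 0) := by
          simpa using hder n
        have := hu0.comp 0 hi
        simpa [Function.comp_def] using this
      have hgt : ∀ t : ℝ, Tendsto (fun K => ∑ n ∈ Finset.range K, v n t) atTop
          (𝓝 (f (x + t • h))) := by
        intro t
        refine (hf (x + t • h)).congr (fun K => Finset.sum_congr rfl (fun n _ => ?_))
        simp [hvdef, map_add, map_smul, smul_eq_mul]
      obtain ⟨L, hL1, hL2⟩ := core v hvc _ hvd _ hgt
      refine ⟨L, ?_, ?_⟩
      · exact hL1.congr (fun K => Finset.sum_congr rfl (fun n _ => rfl))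
      · have h0 : f (x + (0:ℝ) • h) = f x := by simp
        refine hL2.congr (fun t => ?_)
        rw [show x + (0:ℝ) • h = x by simp]
    choose L hL1 hL2 using main
    have hφ : Tendsto (fun K (h : E) => (∑ n ∈ Finset.range K, c n • estar n : E →L[ℝ] ℝ) h)
        atTop (𝓝 L) := by
      rw [tendsto_pi_nhds]
      intro h
      refine (hL1 h).congr (fun K => ?_)
      simp [ContinuousLinearMap.sum_apply, ContinuousLinearMap.smul_apply, smul_eq_mul]
    refine ⟨continuousLinearMapOfTendsto _ hφ, fun h => ?_⟩
    have hFh : (continuousLinearMapOfTendsto _ hφ) h = L h := rfl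
    show Tendsto _ _ _
    rw [hFh]
    exact hL2 h
end

section
/- On the real Banach space ℓ∞(ℕ) of bounded real sequences, the continuous seminorm p(x) = limsup_{n→∞} |x_n| is nowhere Gâteaux-differentiable: for every x ∈ ℓ∞(ℕ) there is no continuous linear functional F on ℓ∞(ℕ) such that lim_{t→0, t≠0} (p(x + t h) − p(x))/t = F(h) for all h ∈ ℓ∞(ℕ). -/
open Filter Topology ENNReal

/-!
Let `L = limsup |x n|`. Pick a subsequence `x (φ k) → a` with `|a| = L` and the direction `w` equal
to `(-1) ^ k` at `φ k` and to `0` elsewhere. Then `limsup |x n + t * w n| = L + |t|`: the bound `≤`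
holds termwise, and the even and odd terms of the subsequence have the cluster values `|a + t|` and
`|a - t|`, the larger of which is `|a| + |t|`. So `t ↦ p (x + t • w)` is `t ↦ p x + |t|`, which has
no derivative at `0`.
-/

lemma max_abs_add_abs_sub (a t : ℝ) : max |a + t| |a - t| = |a| + |t| := by
  refine le_antisymm (max_le (abs_add_le a t) (abs_sub a t)) ?_
  rw [le_max_iff, le_abs, le_abs]
  rcases abs_cases a with ⟨ha, -⟩ | ⟨ha, -⟩ <;> rcases abs_cases t with ⟨ht, -⟩ | ⟨ht, -⟩ <;>
    rw [ha, ht] <;> first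
      | exact .inl (.inl le_rfl) | exact .inr (.inl (by linarith))
      | exact .inr (.inr (by linarith)) | exact .inl (.inr (by linarith))

lemma exists_tendsto_subseq_abs_eq_limsup_abs {x : ℕ → ℝ} {C : ℝ} (hC : ∀ n, |x n| ≤ C) :
    ∃ a : ℝ, ∃ φ : ℕ → ℕ, StrictMono φ ∧ Tendsto (x ∘ φ) atTop (𝓝 a) ∧
      |a| = limsup (fun n => |x n|) atTop := by
  have hbdd : IsBoundedUnder (· ≤ ·) atTop (fun n => |x n|) := isBoundedUnder_of ⟨C, hC⟩
  have hcobdd := isCoboundedUnder_le_of_le atTop (fun n => abs_nonneg (x n))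
  obtain ⟨ψ, hψ, habs⟩ := (MapClusterPt.limsup hcobdd hbdd).tendsto_subseq
  obtain ⟨a, -, φ, hφ, hx⟩ :=
    tendsto_subseq_of_bounded (Metric.isBounded_Icc (-C) C) (x := x ∘ ψ) fun n => abs_le.1 (hC _)
  exact ⟨a, ψ ∘ φ, hψ.comp hφ, hx, tendsto_nhds_unique hx.abs (habs.comp hφ.tendsto_atTop)⟩

lemma limsup_abs_add_mul_le {x w : ℕ → ℝ} {C : ℝ} (hC : ∀ n, |x n| ≤ C) (hw : ∀ n, |w n| ≤ 1)
    (t : ℝ) :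
    limsup (fun n => |x n + t * w n|) atTop ≤ limsup (fun n => |x n|) atTop + |t| := by
  have hle : ∀ n, |x n + t * w n| ≤ |x n| + |t| := fun n =>
    calc |x n + t * w n| ≤ |x n| + |t| * |w n| := by rw [← abs_mul]; exact abs_add_le _ _
      _ ≤ |x n| + |t| := by gcongr; exact mul_le_of_le_one_right (abs_nonneg t) (hw n)
  rw [← limsup_add_const _ _ _ (isBoundedUnder_of ⟨C, hC⟩)
    (isCoboundedUnder_le_of_le atTop fun n => abs_nonneg (x n))]
  exact limsup_le_limsup (Eventually.of_forall hle)
    (isCoboundedUnder_le_of_le atTop fun n => abs_nonneg _)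
    (isBoundedUnder_of ⟨C + |t|, fun n => by grw [hC n]⟩)

noncomputable def alternatingAlong (φ : ℕ → ℕ) : ℕ → ℝ := Function.extend φ (fun k => (-1) ^ k) 0

lemma alternatingAlong_apply {φ : ℕ → ℕ} (hφ : φ.Injective) (k : ℕ) :
    alternatingAlong φ (φ k) = (-1) ^ k :=
  hφ.extend_apply _ _ k

lemma abs_alternatingAlong_le_one (φ : ℕ → ℕ) (n : ℕ) : |alternatingAlong φ n| ≤ 1 := by
  classical
  rw [alternatingAlong, Function.extend_def]
  split_ifs <;> simp

lemma abs_add_abs_le_limsup_abs_add_mul_alternatingAlong {x : ℕ → ℝ} {C a : ℝ} {φ : ℕ → ℕ}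
    (hC : ∀ n, |x n| ≤ C) (hφ : StrictMono φ) (hx : Tendsto (x ∘ φ) atTop (𝓝 a)) (t : ℝ) :
    |a| + |t| ≤ limsup (fun n => |x n + t * alternatingAlong φ n|) atTop := by
  have hbdd : IsBoundedUnder (· ≤ ·) atTop (fun n => |x n + t * alternatingAlong φ n|) :=
    isBoundedUnder_of ⟨C + |t|, fun n => by
      grw [abs_add_le, abs_mul, hC n, abs_alternatingAlong_le_one, mul_one]⟩
  have along : ∀ ψ : ℕ → ℕ, StrictMono ψ → ∀ s : ℝ, (∀ k, alternatingAlong φ (φ (ψ k)) = s) →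
      |a + t * s| ≤ limsup (fun n => |x n + t * alternatingAlong φ n|) atTop := by
    intro ψ hψ s hs
    refine (MapClusterPt.of_comp (hφ.comp hψ).tendsto_atTop ?_).le_limsup hbdd
    refine Tendsto.mapClusterPt ?_
    simpa [Function.comp_def, hs] using ((hx.comp hψ.tendsto_atTop).add_const (t * s)).abs
  have heven := along (2 * ·) (fun m n h => by dsimp; omega) 1 fun k => by
    simp [alternatingAlong_apply hφ.injective]
  have hodd := along (2 * · + 1) (fun m n h => by dsimp; omega) (-1) fun k => by
    simp [alternatingAlong_apply hφ.injective, pow_succ]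
  rw [mul_one] at heven
  rw [mul_neg_one, ← sub_eq_add_neg] at hodd
  rw [← max_abs_add_abs_sub]
  exact max_le heven hodd

lemma exists_limsup_abs_add_smul_eq (x : lp (fun _ : ℕ => ℝ) ∞) :
    ∃ w : lp (fun _ : ℕ => ℝ) ∞, ∀ t : ℝ,
      limsup (fun n => |(x + t • w) n|) atTop = limsup (fun n => |x n|) atTop + |t| := by
  have hC : ∀ n, |x n| ≤ ‖x‖ := fun n => lp.norm_apply_le_norm ENNReal.top_ne_zero x n
  obtain ⟨a, φ, hφ, hx, ha⟩ := exists_tendsto_subseq_abs_eq_limsup_abs hC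
  have hw : Memℓp (alternatingAlong φ) ∞ :=
    memℓp_infty ⟨1, by rintro _ ⟨n, rfl⟩; exact abs_alternatingAlong_le_one φ n⟩
  refine ⟨⟨_, hw⟩, fun t => le_antisymm ?_ ?_⟩
  · exact limsup_abs_add_mul_le hC (abs_alternatingAlong_le_one φ) t
  · rw [← ha]
    exact abs_add_abs_le_limsup_abs_add_mul_alternatingAlong hC hφ hx t

/-- **Example 1 (ii), second part.** On `ℓ∞(ℕ)`, the continuous seminorm
`p x = limsup |x_n|` is nowhere Gâteaux-differentiable. -/
theorem statement9 (p : lp (fun _ : ℕ => ℝ) ∞ → ℝ)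
    (hp : ∀ x : lp (fun _ : ℕ => ℝ) ∞, p x = Filter.limsup (fun n : ℕ => |x n|) atTop) :
    ∀ x : lp (fun _ : ℕ => ℝ) ∞,
      ¬ ∃ F : lp (fun _ : ℕ => ℝ) ∞ →L[ℝ] ℝ,
        ∀ h : lp (fun _ : ℕ => ℝ) ∞,
          Tendsto (fun t : ℝ => (p (x + t • h) - p x) / t) (𝓝[≠] (0 : ℝ)) (𝓝 (F h)) := by
  rintro x ⟨F, hF⟩
  obtain ⟨w, hw⟩ := exists_limsup_abs_add_smul_eq x
  have hline : (fun t : ℝ => p (x + t • w)) = fun t => p x + |t| := by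
    funext t
    rw [hp, hp, hw]
  have hderiv : HasDerivAt (fun t : ℝ => p x + |t|) (F w) 0 := by
    rw [hasDerivAt_iff_tendsto_slope, ← hline]
    simpa only [slope_fun_def_field, zero_smul, add_zero, sub_zero] using hF w
  exact not_differentiableAt_abs_zero ((differentiableAt_const_add_iff _).1 hderiv.differentiableAt)
end

section
/- The norm ‖x‖_1 = Σ_{n=1}^{∞} |x_n| on the real Banach space ℓ¹(ℕ) is Gâteaux-differentiable at a point x = (x_n)_{n≥1} ∈ ℓ¹(ℕ) if and only if x_n ≠ 0 for every n ≥ 1. -/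
/-!
Coordinatewise, `(‖x + t h‖ - ‖x‖) / t = ∑ (|xₙ + t hₙ| - |xₙ|) / t`, and each summand is bounded by
`|hₙ|`. If no `xₙ` vanishes, each summand tends to `sign xₙ · hₙ`, so by dominated convergence the
quotient tends to the bounded functional `h ↦ ∑ sign xₙ · hₙ`. If `xₙ = 0`, then along the unit
vector `eₙ` the quotient is `|t| / t`, whose one-sided limits at `0` are `1` and `-1`.
-/

open Filter Topology

theorem not_tendsto_abs_div_self (c : ℝ) :
    ¬Tendsto (fun t : ℝ => |t| / t) (𝓝[≠] 0) (𝓝 c) := by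
  intro hc
  have hpos : c = 1 := by
    refine tendsto_nhds_unique (hc.mono_left (nhdsGT_le_nhdsNE 0)) ?_
    refine tendsto_const_nhds.congr' ?_
    filter_upwards [self_mem_nhdsWithin] with t (ht : 0 < t)
    rw [abs_of_pos ht, div_self ht.ne']
  have hneg : c = -1 := by
    refine tendsto_nhds_unique (hc.mono_left (nhdsLT_le_nhdsNE 0)) ?_
    refine tendsto_const_nhds.congr' ?_
    filter_upwards [self_mem_nhdsWithin] with t (ht : t < 0)
    rw [abs_of_neg ht, neg_div, div_self ht.ne]
  norm_num [hpos] at hneg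

theorem tendsto_abs_add_mul_slope {y : ℝ} (hy : y ≠ 0) (z : ℝ) :
    Tendsto (fun t : ℝ => (|y + t * z| - |y|) / t) (𝓝[≠] 0) (𝓝 (SignType.sign y * z)) := by
  have hd : HasDerivAt (fun t : ℝ => |y + t * z|) (SignType.sign y * z) 0 := by
    have hline : HasDerivAt (fun t : ℝ => y + t * z) z 0 := by
      simpa using ((hasDerivAt_id (0 : ℝ)).mul_const z).const_add y
    have habs : HasDerivAt (fun u : ℝ => |u|) (SignType.sign y) (y + 0 * z) := by
      simpa using hasDerivAt_abs hy
    exact habs.comp 0 hline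
  simpa [slope_fun_def_field] using hasDerivAt_iff_tendsto_slope.mp hd

theorem abs_abs_add_mul_sub_abs_div_le (y z t : ℝ) : |(|y + t * z| - |y|) / t| ≤ |z| := by
  rcases eq_or_ne t 0 with rfl | ht
  · simp
  rw [abs_div, div_le_iff₀ (abs_pos.mpr ht)]
  simpa [abs_mul, mul_comm] using abs_abs_sub_abs_le_abs_sub (y + t * z) y

theorem abs_mul_le_of_abs_le {a C : ℝ} (ha : |a| ≤ C) (b : ℝ) : |a * b| ≤ C * |b| := by
  rw [abs_mul]
  exact mul_le_mul_of_nonneg_right ha (abs_nonneg b)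

theorem abs_sign_le_one (y : ℝ) : |(SignType.sign y : ℝ)| ≤ 1 := by
  rcases SignType.sign y with _ | _ | _ <;> simp

namespace lp

variable {ι : Type*}

theorem norm_eq_tsum_abs (f : lp (fun _ : ι => ℝ) 1) : ‖f‖ = ∑' i, |f i| := by
  simpa [Real.norm_eq_abs] using lp.norm_eq_tsum_rpow (p := 1) (by norm_num) f

theorem summable_abs (f : lp (fun _ : ι => ℝ) 1) : Summable fun i => |f i| := by
  simpa [Real.norm_eq_abs] using (lp.memℓp f).summable (p := 1) (by norm_num)

theorem summable_mul_of_abs_le {a : ι → ℝ} {C : ℝ} (ha : ∀ i, |a i| ≤ C)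
    (f : lp (fun _ : ι => ℝ) 1) : Summable fun i => a i * f i :=
  .of_norm_bounded ((summable_abs f).mul_left C) fun i => abs_mul_le_of_abs_le (ha i) (f i)

noncomputable def pairingOfAbsLE {a : ι → ℝ} {C : ℝ} (ha : ∀ i, |a i| ≤ C) :
    lp (fun _ : ι => ℝ) 1 →L[ℝ] ℝ :=
  LinearMap.mkContinuous
    { toFun := fun f => ∑' i, a i * f i
      map_add' := fun f g => by
        simp only [coeFn_add, Pi.add_apply, mul_add]
        exact (summable_mul_of_abs_le ha f).tsum_add (summable_mul_of_abs_le ha g)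
      map_smul' := fun c f => by
        simp only [coeFn_smul, Pi.smul_apply, smul_eq_mul, RingHom.id_apply, mul_left_comm _ c,
          tsum_mul_left] }
    C fun f => by
      rw [norm_eq_tsum_abs]
      exact tsum_of_norm_bounded ((summable_abs f).hasSum.mul_left C)
        fun i => abs_mul_le_of_abs_le (ha i) (f i)

theorem pairingOfAbsLE_apply {a : ι → ℝ} {C : ℝ} (ha : ∀ i, |a i| ≤ C)
    (f : lp (fun _ : ι => ℝ) 1) : pairingOfAbsLE ha f = ∑' i, a i * f i := rfl

theorem add_smul_apply (x h : lp (fun _ : ι => ℝ) 1) (t : ℝ) (i : ι) :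
    (x + t • h) i = x i + t * h i := rfl

theorem norm_add_smul_single_of_eq_zero [DecidableEq ι] {x : lp (fun _ : ι => ℝ) 1} {i : ι}
    (hx : x i = 0) (t : ℝ) : ‖x + t • lp.single 1 i 1‖ = ‖x‖ + |t| := by
  have hcoord : ∀ j, |(x + t • lp.single 1 i 1 : lp (fun _ : ι => ℝ) 1) j| =
      |x j| + if j = i then |t| else 0 := by
    intro j
    rw [add_smul_apply]
    rcases eq_or_ne j i with rfl | hji
    · simp [hx]
    · simp [hji]
  rw [norm_eq_tsum_abs, norm_eq_tsum_abs, tsum_congr hcoord,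
    (summable_abs x).tsum_add (summable_of_ne_finset_zero (s := {i}) (by simp_all)), tsum_ite_eq]

theorem tendsto_norm_add_smul_slope {x : lp (fun _ : ι => ℝ) 1} (hx : ∀ i, x i ≠ 0)
    (h : lp (fun _ : ι => ℝ) 1) :
    Tendsto (fun t : ℝ => (‖x + t • h‖ - ‖x‖) / t) (𝓝[≠] 0)
      (𝓝 (pairingOfAbsLE (fun i => abs_sign_le_one (x i)) h)) := by
  have hquot : ∀ t : ℝ, (‖x + t • h‖ - ‖x‖) / t = ∑' i, (|x i + t * h i| - |x i|) / t := by
    intro t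
    have hs : Summable fun i => |x i + t * h i| := by
      simpa only [add_smul_apply] using summable_abs (x + t • h)
    simp only [norm_eq_tsum_abs, add_smul_apply]
    rw [← hs.tsum_sub (summable_abs x), ← tsum_div_const]
  simp only [hquot, pairingOfAbsLE_apply]
  exact tendsto_tsum_of_dominated_convergence (summable_abs h)
    (fun i => tendsto_abs_add_mul_slope (hx i) (h i))
    (Eventually.of_forall fun t i => abs_abs_add_mul_sub_abs_div_le (x i) (h i) t)

end lp

/-- The norm `‖x‖₁ = ∑ |x_n|` of `ℓ¹(ℕ)` is Gâteaux-differentiable at `x` if and only if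
`x_n ≠ 0` for every `n`. -/
theorem statement11 (x : lp (fun _ : ℕ => ℝ) 1) :
    (∃ F : lp (fun _ : ℕ => ℝ) 1 →L[ℝ] ℝ,
      ∀ h : lp (fun _ : ℕ => ℝ) 1,
        Tendsto (fun t : ℝ => (‖x + t • h‖ - ‖x‖) / t) (𝓝[≠] (0 : ℝ)) (𝓝 (F h))) ↔
    ∀ n : ℕ, x n ≠ 0 := by
  constructor
  · rintro ⟨F, hF⟩ n hxn
    refine not_tendsto_abs_div_self (F (lp.single 1 n 1)) ((hF _).congr fun t => ?_)
    rw [lp.norm_add_smul_single_of_eq_zero hxn, add_sub_cancel_left]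
  · exact fun hx => ⟨_, lp.tendsto_norm_add_smul_slope hx⟩
end

section
/- Let 0 < β < 1 satisfy Σ_{n=1}^{∞} β^n < 2, and define f : ℓ∞(ℕ) → ℝ by f(x) = limsup_{n→∞} |x_n| + Σ_{n=1}^{∞} β^n (x_n² − x_n/n). Then f is a convex continuous function on ℓ∞(ℕ), its directional derivative in the direction of the n-th unit vector e_n at any point x is f'(x; e_n) = β^n (2 x_n − 1/n), and the point x* = (1/(2n))_{n≥1} satisfies f(x*) = inf_{x ∈ ℓ∞(ℕ)} f(x). -/
/-! The term `limsup |xₙ|` is a seminorm on `ℓ∞` dominated by the sup norm, hence convex and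
continuous, and it ignores finitely many coordinates, so it does not contribute to derivatives
along `e_n` and vanishes on sequences tending to `0`. For summable weights the series
`∑ wₙ (xₙ² − xₙ/n)` converges uniformly on bounded sets, its summands are convex functions of
`xₙ`, and moving along `e_n` changes only the `n`-th summand. Each summand is minimised at
`xₙ = 1/(2n)`, a null sequence, so `x*` minimises both terms at once. -/

open Filter Topology ENNReal

open scoped lp

section LimsupAbs

lemma abs_apply_le_norm {ι : Type*} (x : ℓ^∞(ι, ℝ)) (i : ι) : |x i| ≤ ‖x‖ :=
  lp.norm_apply_le_norm ENNReal.top_ne_zero x i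

lemma isBoundedUnder_abs_apply (x : ℓ^∞(ℕ, ℝ)) :
    IsBoundedUnder (· ≤ ·) atTop fun n => |x n| :=
  isBoundedUnder_of ⟨‖x‖, abs_apply_le_norm x⟩

lemma isCoboundedUnder_abs_apply (x : ℓ^∞(ℕ, ℝ)) :
    IsCoboundedUnder (· ≤ ·) atTop fun n => |x n| :=
  isCoboundedUnder_le_of_le atTop fun n => abs_nonneg (x n)

noncomputable def limsupAbsSeminorm : Seminorm ℝ ℓ^∞(ℕ, ℝ) :=
  Seminorm.ofSMulLE (fun x => limsup (fun n => |x n|) atTop) (by simp [limsup_const])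
    (fun x y => calc
      limsup (fun n => |(x + y) n|) atTop ≤ limsup ((fun n => |x n|) + fun n => |y n|) atTop :=
        limsup_le_limsup (.of_forall fun n => abs_add_le (x n) (y n))
          (isCoboundedUnder_abs_apply _)
          (isBoundedUnder_of ⟨‖x‖ + ‖y‖, fun n =>
            add_le_add (abs_apply_le_norm x n) (abs_apply_le_norm y n)⟩)
      _ ≤ _ := limsup_add_le (isBoundedUnder_of ⟨0, fun n => abs_nonneg (x n)⟩)
          (isBoundedUnder_abs_apply x) (isCoboundedUnder_abs_apply y) (isBoundedUnder_abs_apply y))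
    (fun r x => calc
      limsup (fun n => |(r • x) n|) atTop = limsup ((fun _ => ‖r‖) * fun n => |x n|) atTop := by
        simp only [lp.coeFn_smul, Pi.smul_apply, smul_eq_mul, abs_mul, Real.norm_eq_abs]; rfl
      _ ≤ limsup (fun _ => ‖r‖) atTop * limsup (fun n => |x n|) atTop :=
        limsup_mul_le (.of_forall fun _ => norm_nonneg r) isBoundedUnder_const
          (.of_forall fun n => abs_nonneg (x n)) (isBoundedUnder_abs_apply x)
      _ = ‖r‖ * limsup (fun n => |x n|) atTop := by rw [limsup_const])

lemma limsupAbsSeminorm_apply (x : ℓ^∞(ℕ, ℝ)) :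
    limsupAbsSeminorm x = limsup (fun n => |x n|) atTop := rfl

lemma limsupAbsSeminorm_le_norm (x : ℓ^∞(ℕ, ℝ)) : limsupAbsSeminorm x ≤ ‖x‖ :=
  limsup_le_of_le (isCoboundedUnder_abs_apply x) (.of_forall (abs_apply_le_norm x))

lemma continuous_limsupAbsSeminorm : Continuous limsupAbsSeminorm :=
  Seminorm.continuous_of_le (q := normSeminorm ℝ ℓ^∞(ℕ, ℝ)) continuous_norm
    limsupAbsSeminorm_le_norm

lemma limsupAbsSeminorm_add_single (x : ℓ^∞(ℕ, ℝ)) (n : ℕ) (a : ℝ) :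
    limsupAbsSeminorm (x + lp.single ∞ n a) = limsupAbsSeminorm x :=
  limsup_congr <| (eventually_ne_atTop n).mono fun m hm => by simp [hm]

lemma limsupAbsSeminorm_eq_zero_of_tendsto {x : ℓ^∞(ℕ, ℝ)} (hx : Tendsto (⇑x) atTop (𝓝 0)) :
    limsupAbsSeminorm x = 0 := by
  rw [limsupAbsSeminorm_apply]
  simpa using hx.abs.limsup_eq

end LimsupAbs

section WeightedQuad

noncomputable def quadTerm (n : ℕ) (t : ℝ) : ℝ := t ^ 2 - t / ((n : ℝ) + 1)

lemma abs_quadTerm_le {t R : ℝ} (ht : |t| ≤ R) (n : ℕ) : |quadTerm n t| ≤ R ^ 2 + R := by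
  have hdiv : |t / ((n : ℝ) + 1)| ≤ |t| := by
    rw [abs_div, abs_of_pos (n.cast_add_one_pos (α := ℝ))]
    exact div_le_self (abs_nonneg t) (by simp)
  calc |quadTerm n t| ≤ |t ^ 2| + |t / ((n : ℝ) + 1)| := abs_sub _ _
    _ ≤ |t| ^ 2 + |t| := by rw [abs_pow]; gcongr
    _ ≤ R ^ 2 + R := by gcongr

lemma convexOn_quadTerm (n : ℕ) : ConvexOn ℝ Set.univ (quadTerm n) := by
  have h : quadTerm n = (fun t => t ^ 2) - fun t => ((n : ℝ) + 1)⁻¹ • id t := by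
    ext t; simp [quadTerm, div_eq_inv_mul]
  rw [h]
  exact (Even.convexOn_pow even_two).sub
    ((concaveOn_id convex_univ).smul (inv_nonneg.2 n.cast_add_one_pos.le))

lemma quadTerm_le (n : ℕ) (t : ℝ) : quadTerm n (1 / (2 * ((n : ℝ) + 1))) ≤ quadTerm n t := by
  have hn : (n : ℝ) + 1 ≠ 0 := by positivity
  have hsq : quadTerm n t - quadTerm n (1 / (2 * ((n : ℝ) + 1))) =
      (t - 1 / (2 * ((n : ℝ) + 1))) ^ 2 := by
    unfold quadTerm; field_simp; ring
  linarith [sq_nonneg (t - 1 / (2 * ((n : ℝ) + 1)))]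

lemma quadTerm_add_sub (n : ℕ) (t s : ℝ) :
    quadTerm n (t + s) - quadTerm n t = s * (2 * t + s - 1 / ((n : ℝ) + 1)) := by
  unfold quadTerm; ring

variable {w : ℕ → ℝ}

noncomputable def weightedQuad (w : ℕ → ℝ) (x : ℓ^∞(ℕ, ℝ)) : ℝ :=
  ∑' n, w n * quadTerm n (x n)

lemma summable_mul_of_abs_le (hw : Summable w) {b : ℕ → ℝ} {C : ℝ} (hb : ∀ n, |b n| ≤ C) :
    Summable fun n => w n * b n :=
  (hw.abs.mul_right C).of_norm_bounded fun n => by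
    rw [Real.norm_eq_abs, abs_mul]; gcongr; exact hb n

lemma summable_weightedQuad (hw : Summable w) (x : ℓ^∞(ℕ, ℝ)) :
    Summable fun n => w n * quadTerm n (x n) :=
  summable_mul_of_abs_le hw fun n => abs_quadTerm_le (abs_apply_le_norm x n) n

lemma convexOn_weightedQuad (hw0 : ∀ n, 0 ≤ w n) (hw : Summable w) :
    ConvexOn ℝ Set.univ (weightedQuad w) := by
  refine ⟨convex_univ, fun x _ y _ a b ha hb hab => ?_⟩
  have hterm : ∀ n, w n * quadTerm n ((a • x + b • y) n) ≤
      a * (w n * quadTerm n (x n)) + b * (w n * quadTerm n (y n)) := fun n => by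
    have := (convexOn_quadTerm n).2 (Set.mem_univ (x n)) (Set.mem_univ (y n)) ha hb hab
    simp only [smul_eq_mul] at this
    simp only [lp.coeFn_add, lp.coeFn_smul, Pi.add_apply, Pi.smul_apply, smul_eq_mul]
    calc _ ≤ w n * (a * quadTerm n (x n) + b * quadTerm n (y n)) :=
          mul_le_mul_of_nonneg_left this (hw0 n)
      _ = _ := by ring
  have hx := summable_weightedQuad hw x
  have hy := summable_weightedQuad hw y
  simp only [smul_eq_mul]
  calc weightedQuad w (a • x + b • y)
      ≤ ∑' n, (a * (w n * quadTerm n (x n)) + b * (w n * quadTerm n (y n))) :=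
        (summable_weightedQuad hw _).tsum_le_tsum hterm ((hx.mul_left a).add (hy.mul_left b))
    _ = a * weightedQuad w x + b * weightedQuad w y := by
        rw [(hx.mul_left a).tsum_add (hy.mul_left b), hx.tsum_mul_left, hy.tsum_mul_left]
        rfl

lemma continuous_weightedQuad (hw : Summable w) : Continuous (weightedQuad w) := by
  refine continuous_iff_continuousAt.2 fun x₀ => ?_
  set R := ‖x₀‖ + 1
  have hcont : ContinuousOn (weightedQuad w) (Metric.ball 0 R) := by
    refine continuousOn_tsum (u := fun n => |w n| * (R ^ 2 + R)) (fun n => ?_)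
      (hw.abs.mul_right _) (fun n x hx => ?_)
    · have hcoord : Continuous fun x : ℓ^∞(ℕ, ℝ) => x n :=
        (lp.evalCLM ℝ (fun _ : ℕ => ℝ) ∞ n).continuous
      exact (continuous_const.mul ((hcoord.pow 2).sub (hcoord.div_const _))).continuousOn
    · rw [Real.norm_eq_abs, abs_mul]
      gcongr
      exact abs_quadTerm_le ((abs_apply_le_norm x n).trans (mem_ball_zero_iff.1 hx).le) n
  exact hcont.continuousAt (Metric.isOpen_ball.mem_nhds (by simp [R]))

lemma coe_add_smul_single (x : ℓ^∞(ℕ, ℝ)) (n : ℕ) (t : ℝ) :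
    ⇑(x + t • lp.single ∞ n 1 : ℓ^∞(ℕ, ℝ)) = Function.update x n (x n + t) := by
  ext m
  simp only [lp.coeFn_add, lp.coeFn_smul, Pi.add_apply, Pi.smul_apply, lp.single_apply,
    smul_eq_mul]
  rcases eq_or_ne m n with rfl | hm <;> simp [*]

lemma weightedQuad_add_smul_single_sub (hw : Summable w) (x : ℓ^∞(ℕ, ℝ)) (n : ℕ) (t : ℝ) :
    weightedQuad w (x + t • lp.single ∞ n 1) - weightedQuad w x =
      t * (w n * (2 * x n + t - 1 / ((n : ℝ) + 1))) := by
  rw [weightedQuad, weightedQuad,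
    ← (summable_weightedQuad hw _).tsum_sub (summable_weightedQuad hw x),
    tsum_eq_single n fun m hm => by rw [coe_add_smul_single, Function.update_of_ne hm, sub_self],
    coe_add_smul_single, Function.update_self, ← mul_sub, quadTerm_add_sub]
  ring

lemma weightedQuad_le (hw0 : ∀ n, 0 ≤ w n) (hw : Summable w) {xs : ℓ^∞(ℕ, ℝ)}
    (hxs : ∀ n, xs n = 1 / (2 * ((n : ℝ) + 1))) (x : ℓ^∞(ℕ, ℝ)) :
    weightedQuad w xs ≤ weightedQuad w x :=
  (summable_weightedQuad hw xs).tsum_le_tsum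
    (fun n => by rw [hxs]; exact mul_le_mul_of_nonneg_left (quadTerm_le n (x n)) (hw0 n))
    (summable_weightedQuad hw x)

end WeightedQuad

section LimsupAbsAddWeightedQuad

variable {w : ℕ → ℝ}

noncomputable def limsupAbsAddWeightedQuad (w : ℕ → ℝ) (x : ℓ^∞(ℕ, ℝ)) : ℝ :=
  limsupAbsSeminorm x + weightedQuad w x

lemma convexOn_limsupAbsAddWeightedQuad (hw0 : ∀ n, 0 ≤ w n) (hw : Summable w) :
    ConvexOn ℝ Set.univ (limsupAbsAddWeightedQuad w) :=
  limsupAbsSeminorm.convexOn.add (convexOn_weightedQuad hw0 hw)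

lemma continuous_limsupAbsAddWeightedQuad (hw : Summable w) :
    Continuous (limsupAbsAddWeightedQuad w) :=
  continuous_limsupAbsSeminorm.add (continuous_weightedQuad hw)

lemma tendsto_slope_limsupAbsAddWeightedQuad (hw : Summable w) (x : ℓ^∞(ℕ, ℝ)) (n : ℕ) :
    Tendsto (fun t : ℝ =>
        (limsupAbsAddWeightedQuad w (x + t • lp.single ∞ n 1) - limsupAbsAddWeightedQuad w x) / t)
      (𝓝[≠] 0) (𝓝 (w n * (2 * x n - 1 / ((n : ℝ) + 1)))) := by
  have hslope : ∀ t ≠ 0,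
      (limsupAbsAddWeightedQuad w (x + t • lp.single ∞ n 1) - limsupAbsAddWeightedQuad w x) / t =
        w n * (2 * x n + t - 1 / ((n : ℝ) + 1)) := fun t ht => by
    rw [limsupAbsAddWeightedQuad, limsupAbsAddWeightedQuad, ← lp.single_smul,
      limsupAbsSeminorm_add_single, add_sub_add_left_eq_sub, lp.single_smul,
      weightedQuad_add_smul_single_sub hw, mul_div_cancel_left₀ _ ht]
  have hlim : Tendsto (fun t : ℝ => w n * (2 * x n + t - 1 / ((n : ℝ) + 1))) (𝓝 0)
      (𝓝 (w n * (2 * x n - 1 / ((n : ℝ) + 1)))) := by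
    have hcont : Continuous fun t : ℝ => w n * (2 * x n + t - 1 / ((n : ℝ) + 1)) := by fun_prop
    simpa using hcont.tendsto 0
  exact (hlim.mono_left nhdsWithin_le_nhds).congr' <|
    eventually_nhdsWithin_of_forall fun t ht => (hslope t ht).symm

lemma limsupAbsAddWeightedQuad_le (hw0 : ∀ n, 0 ≤ w n) (hw : Summable w) {xs : ℓ^∞(ℕ, ℝ)}
    (hxs : ∀ n, xs n = 1 / (2 * ((n : ℝ) + 1))) (x : ℓ^∞(ℕ, ℝ)) :
    limsupAbsAddWeightedQuad w xs ≤ limsupAbsAddWeightedQuad w x := by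
  have hxs_tendsto : Tendsto (⇑xs) atTop (𝓝 0) := by
    have := tendsto_one_div_add_atTop_nhds_zero_nat.const_mul (1 / 2 : ℝ)
    rw [mul_zero] at this
    exact this.congr fun n => by rw [hxs, one_div_mul_one_div]
  refine add_le_add ?_ (weightedQuad_le hw0 hw hxs x)
  rw [limsupAbsSeminorm_eq_zero_of_tendsto hxs_tendsto]
  exact apply_nonneg _ x

end LimsupAbsAddWeightedQuad

theorem statement12_general (β : ℝ) (hβ0 : 0 < β) (hβ1 : β < 1)
    (f : lp (fun _ : ℕ => ℝ) ∞ → ℝ)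
    (hf : ∀ x : lp (fun _ : ℕ => ℝ) ∞,
      f x = Filter.limsup (fun n : ℕ => |x n|) atTop +
        ∑' n : ℕ, β ^ (n + 1) * ((x n) ^ 2 - x n / ((n : ℝ) + 1)))
    (xs : lp (fun _ : ℕ => ℝ) ∞)
    (hxs : ∀ n : ℕ, xs n = 1 / (2 * ((n : ℝ) + 1))) :
    ConvexOn ℝ Set.univ f ∧ Continuous f ∧
    (∀ (x : lp (fun _ : ℕ => ℝ) ∞) (n : ℕ),
      Tendsto (fun t : ℝ => (f (x + t • lp.single ∞ n (1 : ℝ)) - f x) / t)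
        (𝓝[≠] (0 : ℝ)) (𝓝 (β ^ (n + 1) * (2 * x n - 1 / ((n : ℝ) + 1))))) ∧
    IsLeast (Set.range f) (f xs) := by
  have hw0 : ∀ n : ℕ, 0 ≤ β ^ (n + 1) := fun n => by positivity
  have hw : Summable fun n : ℕ => β ^ (n + 1) :=
    (summable_nat_add_iff 1).2 (summable_geometric_of_lt_one hβ0.le hβ1)
  obtain rfl : f = limsupAbsAddWeightedQuad fun n => β ^ (n + 1) := funext hf
  exact ⟨convexOn_limsupAbsAddWeightedQuad hw0 hw, continuous_limsupAbsAddWeightedQuad hw,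
    tendsto_slope_limsupAbsAddWeightedQuad hw,
    ⟨Set.mem_range_self xs, Set.forall_mem_range.2 (limsupAbsAddWeightedQuad_le hw0 hw hxs)⟩⟩

/-- **Example 3, positive part.** Let `0 < β < 1` with `∑_{n≥1} β^n < 2`, and on `ℓ∞(ℕ)` let
`f x = limsup |x_n| + ∑_{n≥1} β^n (x_n² − x_n/n)`.  Then `f` is convex and continuous, its
directional derivative in the direction of the `n`-th unit vector at any `x` is
`f'(x; e_n) = β^n (2 x_n − 1/n)`, and `x* = (1/(2n))_n` minimizes `f` over `ℓ∞(ℕ)`.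
(Here the index `n : ℕ` of the formalization corresponds to `n+1 ≥ 1` of the statement.) -/
theorem statement12 (β : ℝ) (hβ0 : 0 < β) (hβ1 : β < 1)
    (hβ2 : ∑' n : ℕ, β ^ (n + 1) < 2)
    (f : lp (fun _ : ℕ => ℝ) ∞ → ℝ)
    (hf : ∀ x : lp (fun _ : ℕ => ℝ) ∞,
      f x = Filter.limsup (fun n : ℕ => |x n|) atTop +
        ∑' n : ℕ, β ^ (n + 1) * ((x n) ^ 2 - x n / ((n : ℝ) + 1)))
    (xs : lp (fun _ : ℕ => ℝ) ∞)
    (hxs : ∀ n : ℕ, xs n = 1 / (2 * ((n : ℝ) + 1))) :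
    ConvexOn ℝ Set.univ f ∧ Continuous f ∧
    (∀ (x : lp (fun _ : ℕ => ℝ) ∞) (n : ℕ),
      Tendsto (fun t : ℝ => (f (x + t • lp.single ∞ n (1 : ℝ)) - f x) / t)
        (𝓝[≠] (0 : ℝ)) (𝓝 (β ^ (n + 1) * (2 * x n - 1 / ((n : ℝ) + 1))))) ∧
    IsLeast (Set.range f) (f xs) :=
  statement12_general β hβ0 hβ1 f hf xs hxs
end

section
/- Let 0 < β < 1 satisfy Σ_{n=1}^{∞} β^n < 2, and define f : ℓ∞(ℕ) → ℝ by f(x) = limsup_{n→∞} |x_n| + Σ_{n=1}^{∞} β^n (x_n² − x_n/n). Then f is not Gâteaux-differentiable at the point x* = (1/(2n))_{n≥1}, even though f attains its infimum over ℓ∞(ℕ) at x* and f'(x*; e_n) = 0 for all n ≥ 1. -/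
open Filter Topology ENNReal

/-!
Since `x_n² − x_n/n = (x_n − x*_n)² − x*_n²` and `x*_n → 0`, completing the square gives
`f x − f x* = limsup |x_n| + ∑ β^n (x_n − x*_n)²`, which is nonnegative. Along a direction `h`
whose coordinates converge to `c`, the increment is `|c| |t| + t² ∑ β^n h_n²`: for `h = e_n`
(`c = 0`) the difference quotient tends to `0`, while for `h = 1` (`c = 1`) it tends to `±1`
as `t → 0±`, so no Gâteaux derivative exists.
-/

open scoped lp

lemma tendsto_mul_abs_add_mul_sq_div_nhdsGT (C Q : ℝ) :
    Tendsto (fun t : ℝ => (C * |t| + Q * t ^ 2) / t) (𝓝[>] 0) (𝓝 C) := by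
  have h : Tendsto (fun t : ℝ => C + Q * t) (𝓝[>] 0) (𝓝 C) :=
    ((continuous_const.add (continuous_const.mul continuous_id)).tendsto' 0 C (by simp)).mono_left
      nhdsWithin_le_nhds
  refine h.congr' ?_
  filter_upwards [self_mem_nhdsWithin] with t (ht : 0 < t)
  rw [abs_of_pos ht]
  field_simp

lemma tendsto_mul_abs_add_mul_sq_div_nhdsLT (C Q : ℝ) :
    Tendsto (fun t : ℝ => (C * |t| + Q * t ^ 2) / t) (𝓝[<] 0) (𝓝 (-C)) := by
  have h : Tendsto (fun t : ℝ => -C + Q * t) (𝓝[<] 0) (𝓝 (-C)) :=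
    ((continuous_const.add (continuous_const.mul continuous_id)).tendsto' 0 (-C) (by simp)).mono_left
      nhdsWithin_le_nhds
  refine h.congr' ?_
  filter_upwards [self_mem_nhdsWithin] with t (ht : t < 0)
  have ht0 : t ≠ 0 := ht.ne
  rw [abs_of_neg ht]
  field_simp

namespace LimsupQuad

noncomputable def fn (β : ℝ) (x : ℓ^∞(ℕ, ℝ)) : ℝ :=
  limsup (fun n : ℕ => |x n|) atTop + ∑' n : ℕ, β ^ (n + 1) * ((x n) ^ 2 - x n / ((n : ℝ) + 1))

variable {β : ℝ}

lemma summable_pow_succ_mul_sq (hβ : |β| < 1) (y : ℓ^∞(ℕ, ℝ)) :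
    Summable fun k : ℕ => β ^ (k + 1) * (y k) ^ 2 := by
  refine Summable.of_norm_bounded
    ((summable_geometric_of_lt_one (abs_nonneg β) hβ).mul_right (|β| * ‖y‖ ^ 2)) fun k => ?_
  have hyk : |y k| ≤ ‖y‖ := lp.norm_apply_le_norm ENNReal.top_ne_zero y k
  rw [Real.norm_eq_abs, abs_mul, abs_pow, abs_pow, pow_succ, mul_assoc]
  gcongr

lemma limsup_abs_nonneg (x : ℓ^∞(ℕ, ℝ)) : 0 ≤ limsup (fun n : ℕ => |x n|) atTop :=
  le_limsup_of_frequently_le (Frequently.of_forall fun _ => abs_nonneg _)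
    (isBoundedUnder_of ⟨‖x‖, fun n => lp.norm_apply_le_norm ENNReal.top_ne_zero x n⟩)

variable {a : ℓ^∞(ℕ, ℝ)} (ha : ∀ n : ℕ, a n = 1 / (2 * ((n : ℝ) + 1)))
include ha

lemma tendsto_center : Tendsto (fun n : ℕ => a n) atTop (𝓝 0) := by
  have h := (tendsto_one_div_add_atTop_nhds_zero_nat (𝕜 := ℝ)).const_mul (1 / 2)
  rw [mul_zero] at h
  refine h.congr fun n => ?_
  rw [ha n, one_div_mul_one_div]

lemma tsum_eq_tsum_sub_sq_sub (hβ : |β| < 1) (x : ℓ^∞(ℕ, ℝ)) :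
    ∑' k : ℕ, β ^ (k + 1) * ((x k) ^ 2 - x k / ((k : ℝ) + 1)) =
      ∑' k : ℕ, β ^ (k + 1) * (x k - a k) ^ 2 - ∑' k : ℕ, β ^ (k + 1) * (a k) ^ 2 := by
  have hsub := summable_pow_succ_mul_sq hβ (x - a)
  simp only [lp.coeFn_sub, Pi.sub_apply] at hsub
  rw [← hsub.tsum_sub (summable_pow_succ_mul_sq hβ a)]
  congr 1 with k
  rw [ha k]
  field_simp
  ring

lemma fn_sub_fn_center (hβ : |β| < 1) (x : ℓ^∞(ℕ, ℝ)) :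
    fn β x - fn β a =
      limsup (fun n : ℕ => |x n|) atTop + ∑' k : ℕ, β ^ (k + 1) * (x k - a k) ^ 2 := by
  have hlim : limsup (fun n : ℕ => |a n|) atTop = 0 := by
    simpa using ((tendsto_center ha).abs).limsup_eq
  simp only [fn, tsum_eq_tsum_sub_sq_sub ha hβ, hlim, sub_self]
  simp only [ne_eq, OfNat.ofNat_ne_zero, not_false_eq_true, zero_pow, mul_zero, tsum_zero]
  ring

lemma fn_add_smul_sub_fn_center (hβ : |β| < 1) (h : ℓ^∞(ℕ, ℝ)) {c : ℝ}
    (hc : Tendsto (fun n : ℕ => h n) atTop (𝓝 c)) (t : ℝ) :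
    fn β (a + t • h) - fn β a = |c| * |t| + (∑' k : ℕ, β ^ (k + 1) * (h k) ^ 2) * t ^ 2 := by
  have hcoord : ∀ k, (a + t • h) k = a k + t * h k := fun k => rfl
  have hlim : limsup (fun n : ℕ => |(a + t • h) n|) atTop = |c| * |t| := by
    have hat := (tendsto_center ha).add (hc.const_mul t)
    rw [zero_add, ← funext hcoord] at hat
    rw [hat.abs.limsup_eq, abs_mul, mul_comm]
  rw [fn_sub_fn_center ha hβ, hlim, ← tsum_mul_right]
  congr 2 with k
  rw [hcoord]
  ring

lemma tendsto_slope_nhdsGT (hβ : |β| < 1) (h : ℓ^∞(ℕ, ℝ)) {c : ℝ}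
    (hc : Tendsto (fun n : ℕ => h n) atTop (𝓝 c)) :
    Tendsto (fun t : ℝ => (fn β (a + t • h) - fn β a) / t) (𝓝[>] 0) (𝓝 |c|) := by
  simpa only [fn_add_smul_sub_fn_center ha hβ h hc] using
    tendsto_mul_abs_add_mul_sq_div_nhdsGT |c| (∑' k : ℕ, β ^ (k + 1) * (h k) ^ 2)

lemma tendsto_slope_nhdsLT (hβ : |β| < 1) (h : ℓ^∞(ℕ, ℝ)) {c : ℝ}
    (hc : Tendsto (fun n : ℕ => h n) atTop (𝓝 c)) :
    Tendsto (fun t : ℝ => (fn β (a + t • h) - fn β a) / t) (𝓝[<] 0) (𝓝 (-|c|)) := by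
  simpa only [fn_add_smul_sub_fn_center ha hβ h hc] using
    tendsto_mul_abs_add_mul_sq_div_nhdsLT |c| (∑' k : ℕ, β ^ (k + 1) * (h k) ^ 2)

end LimsupQuad

open LimsupQuad in
theorem statement13_general (β : ℝ) (hβ0 : 0 < β) (hβ1 : β < 1)
    (f : lp (fun _ : ℕ => ℝ) ∞ → ℝ)
    (hf : ∀ x : lp (fun _ : ℕ => ℝ) ∞,
      f x = Filter.limsup (fun n : ℕ => |x n|) atTop +
        ∑' n : ℕ, β ^ (n + 1) * ((x n) ^ 2 - x n / ((n : ℝ) + 1)))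
    (xs : lp (fun _ : ℕ => ℝ) ∞)
    (hxs : ∀ n : ℕ, xs n = 1 / (2 * ((n : ℝ) + 1))) :
    (¬ ∃ F : lp (fun _ : ℕ => ℝ) ∞ →L[ℝ] ℝ,
      ∀ h : lp (fun _ : ℕ => ℝ) ∞,
        Tendsto (fun t : ℝ => (f (xs + t • h) - f xs) / t) (𝓝[≠] (0 : ℝ)) (𝓝 (F h))) ∧
    (∀ x : lp (fun _ : ℕ => ℝ) ∞, f xs ≤ f x) ∧
    (∀ n : ℕ,
      Tendsto (fun t : ℝ => (f (xs + t • lp.single ∞ n (1 : ℝ)) - f xs) / t)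
        (𝓝[≠] (0 : ℝ)) (𝓝 (0 : ℝ))) := by
  have hβ : |β| < 1 := abs_lt.mpr ⟨by linarith, hβ1⟩
  obtain rfl : f = fn β := funext hf
  refine ⟨?_, fun x => ?_, fun n => ?_⟩
  · rintro ⟨F, hF⟩
    have hone : Tendsto (fun n : ℕ => (1 : ℓ^∞(ℕ, ℝ)) n) atTop (𝓝 1) := by
      simp only [lp.infty_coeFn_one, Pi.one_apply, tendsto_const_nhds]
    have hpos := tendsto_nhds_unique ((hF 1).mono_left (nhdsGT_le_nhdsNE 0))
      (tendsto_slope_nhdsGT hxs hβ 1 hone)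
    have hneg := tendsto_nhds_unique ((hF 1).mono_left (nhdsLT_le_nhdsNE 0))
      (tendsto_slope_nhdsLT hxs hβ 1 hone)
    norm_num [hpos] at hneg
  · have hsq : 0 ≤ ∑' k : ℕ, β ^ (k + 1) * (x k - xs k) ^ 2 := tsum_nonneg fun k => by positivity
    linarith [fn_sub_fn_center hxs hβ x, limsup_abs_nonneg x]
  · have hsingle : Tendsto (fun k : ℕ => lp.single ∞ n (1 : ℝ) k) atTop (𝓝 0) := by
      refine tendsto_const_nhds.congr' ?_
      filter_upwards [eventually_ne_atTop n] with k hk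
      exact (lp.single_apply_ne (E := fun _ : ℕ => ℝ) ∞ n 1 hk).symm
    have hleft := tendsto_slope_nhdsLT hxs hβ _ hsingle
    have hright := tendsto_slope_nhdsGT hxs hβ _ hsingle
    simp only [abs_zero, neg_zero] at hleft hright
    rw [← nhdsLT_sup_nhdsGT]
    exact hleft.sup hright

/-- **Example 3, negative part.** Let `0 < β < 1` with `∑_{n≥1} β^n < 2`, and on `ℓ∞(ℕ)` let
`f x = limsup |x_n| + ∑_{n≥1} β^n (x_n² − x_n/n)`.  Then `f` is not Gâteaux-differentiable at
`x* = (1/(2n))_n`, even though `f` attains its infimum over `ℓ∞(ℕ)` at `x*` and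
`f'(x*; e_n) = 0` for all `n`.
(Here the index `n : ℕ` of the formalization corresponds to `n+1 ≥ 1` of the statement.) -/
theorem statement13 (β : ℝ) (hβ0 : 0 < β) (hβ1 : β < 1)
    (hβ2 : ∑' n : ℕ, β ^ (n + 1) < 2)
    (f : lp (fun _ : ℕ => ℝ) ∞ → ℝ)
    (hf : ∀ x : lp (fun _ : ℕ => ℝ) ∞,
      f x = Filter.limsup (fun n : ℕ => |x n|) atTop +
        ∑' n : ℕ, β ^ (n + 1) * ((x n) ^ 2 - x n / ((n : ℝ) + 1)))
    (xs : lp (fun _ : ℕ => ℝ) ∞)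
    (hxs : ∀ n : ℕ, xs n = 1 / (2 * ((n : ℝ) + 1))) :
    (¬ ∃ F : lp (fun _ : ℕ => ℝ) ∞ →L[ℝ] ℝ,
      ∀ h : lp (fun _ : ℕ => ℝ) ∞,
        Tendsto (fun t : ℝ => (f (xs + t • h) - f xs) / t) (𝓝[≠] (0 : ℝ)) (𝓝 (F h))) ∧
    (∀ x : lp (fun _ : ℕ => ℝ) ∞, f xs ≤ f x) ∧
    (∀ n : ℕ,
      Tendsto (fun t : ℝ => (f (xs + t • lp.single ∞ n (1 : ℝ)) - f xs) / t)
        (𝓝[≠] (0 : ℝ)) (𝓝 (0 : ℝ))) :=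
  statement13_general β hβ0 hβ1 f hf xs hxs
end

section
/- Let 0 < β < 1 be fixed and let X = ℓ¹(ℕ) ∩ (ℝ₊)^ℕ, with f : X → ℝ defined by f((x_n)_n) = Σ_{n=1}^{∞} x_n − Σ_{n=1}^{∞} 2 β^n x_n^{1/2}. Then, with P^k the projection onto the first k coordinates, for all x, x* ∈ X and all k ≥ 1 the point x* + P^k(x − x*) belongs to X, and lim_{k→∞} f(x* + P^k(x − x*)) = f(x); in particular f is pseudo-semicontinuous on X with respect to every point of X. -/
open Filter Topology

/-- The set `X = ℓ¹(ℕ) ∩ (ℝ₊)^ℕ` of summable sequences with non-negative terms. -/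
def Xset : Set (ℕ → ℝ) := {x | Summable (fun n => |x n|) ∧ ∀ n, 0 ≤ x n}

/-- The function `f((x_n)) = ∑_{n≥1} x_n − ∑_{n≥1} 2 β^n √(x_n)` of Example 4. -/
noncomputable def fEx4 (β : ℝ) (x : ℕ → ℝ) : ℝ :=
  (∑' n : ℕ, x n) - ∑' n : ℕ, 2 * β ^ (n + 1) * Real.sqrt (x n)

/-- The truncation `P^k x = (x_1, …, x_k, 0, 0, …)` of a sequence. -/
def projSeq (k : ℕ) (x : ℕ → ℝ) : ℕ → ℝ := fun n => if n < k then x n else 0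

lemma proj_eq (x xs : ℕ → ℝ) (k : ℕ) :
    xs + projSeq k (x - xs) = fun n => if n < k then x n else xs n := by
  funext n
  simp only [projSeq, Pi.add_apply, Pi.sub_apply]
  split_ifs <;> ring

lemma summable_of_mem {x : ℕ → ℝ} (hx : x ∈ Xset) : Summable x :=
  summable_abs_iff.mp hx.1

lemma sqrt_summable (β : ℝ) (hβ0 : 0 < β) (hβ1 : β < 1) {x : ℕ → ℝ} (hx : x ∈ Xset) :
    Summable (fun n => 2 * β ^ (n + 1) * Real.sqrt (x n)) := by
  have hb : Summable (fun n : ℕ => (2 * Real.sqrt (∑' m, x m) * β) * β ^ n) :=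
    (summable_geometric_of_lt_one hβ0.le hβ1).mul_left _
  refine Summable.of_nonneg_of_le (fun n => by positivity) (fun n => ?_) hb
  have h1 : x n ≤ ∑' m, x m := Summable.le_tsum (summable_of_mem hx) n (fun m _ => hx.2 m)
  have h2 : Real.sqrt (x n) ≤ Real.sqrt (∑' m, x m) := Real.sqrt_le_sqrt h1
  calc 2 * β ^ (n+1) * Real.sqrt (x n) ≤ 2 * β ^ (n+1) * Real.sqrt (∑' m, x m) := by
        apply mul_le_mul_of_nonneg_left h2; positivity
    _ = (2 * Real.sqrt (∑' m, x m) * β) * β ^ n := by ring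

lemma mem_proj {x xs : ℕ → ℝ} (hx : x ∈ Xset) (hxs : xs ∈ Xset) (k : ℕ) :
    xs + projSeq k (x - xs) ∈ Xset := by
  rw [proj_eq]
  constructor
  · refine Summable.of_nonneg_of_le (fun n => abs_nonneg _) (fun n => ?_) (hx.1.add hxs.1)
    dsimp only
    split_ifs with h
    · exact le_add_of_le_of_nonneg le_rfl (abs_nonneg _)
    · exact le_add_of_nonneg_of_le (abs_nonneg _) le_rfl
  · intro n; dsimp only; split_ifs with h
    · exact hx.2 n
    · exact hxs.2 n

lemma tsum_ite_shift (g : ℕ → ℝ) (hg : Summable g) (k : ℕ) :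
    ∑' n, (if n < k then 0 else g n) = ∑' n, g (n + k) := by
  have heq : (fun n => if n < k then (0:ℝ) else g n) = Set.indicator {n | k ≤ n} g := by
    funext n
    by_cases h : n < k
    · rw [if_pos h, Set.indicator_of_notMem]; simpa using h
    · rw [if_neg h, Set.indicator_of_mem]; simpa using not_lt.mp h
  have hh : Summable (fun n => if n < k then (0:ℝ) else g n) := by
    rw [heq]; exact hg.indicator _
  have := Summable.sum_add_tsum_nat_add (f := fun n => if n < k then (0:ℝ) else g n) k hh
  have hzero : ∑ i ∈ Finset.range k, (if i < k then (0:ℝ) else g i) = 0 := by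
    apply Finset.sum_eq_zero
    intro i hi
    rw [if_pos (Finset.mem_range.mp hi)]
  have htail : (fun n => if n + k < k then (0:ℝ) else g (n + k)) = fun n => g (n + k) := by
    funext n; rw [if_neg (by omega)]
  rw [hzero, zero_add, htail] at this
  exact this.symm

lemma key_tendsto (β : ℝ) (hβ0 : 0 < β) (hβ1 : β < 1) {x xs : ℕ → ℝ}
    (hx : x ∈ Xset) (hxs : xs ∈ Xset) :
    Tendsto (fun k : ℕ => fEx4 β (xs + projSeq k (x - xs))) atTop (𝓝 (fEx4 β x)) := by
  set g : ℕ → ℝ := fun n => xs n - x n with hgdef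
  set u : ℕ → ℝ := fun n => 2 * β ^ (n+1) * Real.sqrt (xs n) - 2 * β ^ (n+1) * Real.sqrt (x n)
    with hudef
  have hgs : Summable g := (summable_of_mem hxs).sub (summable_of_mem hx)
  have hus : Summable u := (sqrt_summable β hβ0 hβ1 hxs).sub (sqrt_summable β hβ0 hβ1 hx)
  have hgite : ∀ k, Summable (fun n => if n < k then (0:ℝ) else g n) := by
    intro k
    have : (fun n => if n < k then (0:ℝ) else g n) = Set.indicator {n | k ≤ n} g := by
      funext n
      by_cases h : n < k
      · rw [if_pos h, Set.indicator_of_notMem]; simpa using h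
      · rw [if_neg h, Set.indicator_of_mem]; simpa using not_lt.mp h
    rw [this]; exact hgs.indicator _
  have huite : ∀ k, Summable (fun n => if n < k then (0:ℝ) else u n) := by
    intro k
    have : (fun n => if n < k then (0:ℝ) else u n) = Set.indicator {n | k ≤ n} u := by
      funext n
      by_cases h : n < k
      · rw [if_pos h, Set.indicator_of_notMem]; simpa using h
      · rw [if_neg h, Set.indicator_of_mem]; simpa using not_lt.mp h
    rw [this]; exact hus.indicator _
  have hF : ∀ k : ℕ, fEx4 β (xs + projSeq k (x - xs))
      = fEx4 β x + (∑' n, g (n + k)) - (∑' n, u (n + k)) := by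
    intro k
    rw [proj_eq]
    have h1 : (fun n => if n < k then x n else xs n)
        = fun n => x n + (if n < k then (0:ℝ) else g n) := by
      funext n; split_ifs <;> simp [hgdef] <;> ring
    have h2 : (fun n => 2 * β ^ (n+1) * Real.sqrt (if n < k then x n else xs n))
        = fun n => 2 * β ^ (n+1) * Real.sqrt (x n) + (if n < k then (0:ℝ) else u n) := by
      funext n; split_ifs <;> simp [hudef] <;> ring
    unfold fEx4
    simp only [h2]
    rw [show (∑' (n : ℕ), if n < k then x n else xs n)
        = ∑' n, (x n + (if n < k then (0:ℝ) else g n)) from by rw [h1]]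
    rw [Summable.tsum_add (summable_of_mem hx) (hgite k),
        Summable.tsum_add (sqrt_summable β hβ0 hβ1 hx) (huite k),
        tsum_ite_shift g hgs k, tsum_ite_shift u hus k]
    ring
  simp only [hF]
  have hA : Tendsto (fun k : ℕ => ∑' n, g (n + k)) atTop (𝓝 0) := tendsto_sum_nat_add g
  have hB : Tendsto (fun k : ℕ => ∑' n, u (n + k)) atTop (𝓝 0) := tendsto_sum_nat_add u
  have := ((tendsto_const_nhds (x := fEx4 β x) (f := atTop (α := ℕ))).add hA).sub hB
  simpa using this

/-- **Example 4, qualification and pseudo-semicontinuity.** For `0 < β < 1`,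
`X = ℓ¹(ℕ) ∩ (ℝ₊)^ℕ` and `f((x_n)) = ∑ x_n − ∑ 2 β^n √(x_n)` : for all `x, x* ∈ X` and all
`k`, `x* + P^k(x − x*) ∈ X` and `f(x* + P^k(x − x*)) → f(x)` as `k → ∞`; in particular `f`
is pseudo-semicontinuous on `X` with respect to every point of `X`. -/
theorem statement15 (β : ℝ) (hβ0 : 0 < β) (hβ1 : β < 1) :
    (∀ x ∈ Xset, ∀ xs ∈ Xset, ∀ k : ℕ, xs + projSeq k (x - xs) ∈ Xset) ∧
    (∀ x ∈ Xset, ∀ xs ∈ Xset,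
      Tendsto (fun k : ℕ => fEx4 β (xs + projSeq k (x - xs))) atTop (𝓝 (fEx4 β x))) ∧
    (∀ xs ∈ Xset, ∀ x ∈ Xset,
      Filter.limsup (fun k : ℕ => ((fEx4 β (xs + projSeq k (x - xs)) : ℝ) : EReal)) atTop
        ≤ ((fEx4 β x : ℝ) : EReal)) := by
  refine ⟨fun x hx xs hxs k => mem_proj hx hxs k,
    fun x hx xs hxs => key_tendsto β hβ0 hβ1 hx hxs, fun xs hxs x hx => ?_⟩
  have h := key_tendsto β hβ0 hβ1 hx hxs
  have h2 : Tendsto (fun k : ℕ => ((fEx4 β (xs + projSeq k (x - xs)) : ℝ) : EReal)) atTop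
      (𝓝 ((fEx4 β x : ℝ) : EReal)) := EReal.tendsto_coe.mpr h
  exact le_of_eq h2.limsup_eq
end

section
/- Let 0 < β < 1 satisfy Σ_{n=1}^{∞} β^n < 2, and define g : ℓ∞(ℕ) → ℝ by g((x_n)_n) = limsup_{n→∞} |x_n| + Σ_{n=1}^{∞} β^n (x_n² − 2 x_n). Then the constant sequence 𝟙 = (1, 1, 1, …) satisfies g'(𝟙; e_n) = 0 for all n ≥ 1, yet 𝟙 is not a minimizer of g on ℓ∞(ℕ): indeed g(1, 1, 1, …) > g(1/2, 1/2, 1/2, …). -/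
open Filter Topology ENNReal

/-!
Along the coordinate direction `e_n` the limsup term does not move (it ignores finitely many
coordinates), so `t ↦ g (x + t e_n)` is the quadratic `g x + β^(n+1) (t² + 2 t (x_n - 1))`,
whose derivative at `0` vanishes at `x = 𝟙`. Yet the limsup term is not differentiable in
uniform directions: with `S = ∑ β^(n+1)` one gets `g 𝟙 = 1 - S` and `g (½ 𝟙) = ½ - ¾ S`,
and `S < 2` is exactly what makes the latter smaller.
-/

noncomputable def limsupPenalty (w : ℕ → ℝ) (x : ℕ → ℝ) : ℝ :=
  limsup (fun n => |x n|) atTop + ∑' n, w n * (x n ^ 2 - 2 * x n)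

namespace limsupPenalty

variable (w : ℕ → ℝ)

theorem apply_const (c : ℝ) :
    limsupPenalty w (fun _ => c) = |c| + (∑' n, w n) * (c ^ 2 - 2 * c) := by
  rw [limsupPenalty, limsup_const, tsum_mul_right]

theorem add_smul_single {x : ℕ → ℝ} (hx : Summable fun k => w k * (x k ^ 2 - 2 * x k))
    (n : ℕ) (t : ℝ) :
    limsupPenalty w (x + t • (Pi.single n 1 : ℕ → ℝ)) =
      limsupPenalty w x + w n * (t ^ 2 + 2 * t * (x n - 1)) := by
  set y := x + t • (Pi.single n 1 : ℕ → ℝ) with hy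
  have hlimsup : (fun k => |y k|) =ᶠ[atTop] fun k => |x k| := by
    filter_upwards [eventually_ne_atTop n] with k hk
    simp [hy, Pi.single_eq_of_ne hk]
  have hterms (k : ℕ) : w k * (y k ^ 2 - 2 * y k) = w k * (x k ^ 2 - 2 * x k) +
      (Pi.single n (w n * (t ^ 2 + 2 * t * (x n - 1))) : ℕ → ℝ) k := by
    rcases eq_or_ne k n with rfl | hk
    · simp only [hy, Pi.add_apply, Pi.smul_apply, Pi.single_eq_same, smul_eq_mul]
      ring
    · simp [hy, Pi.single_eq_of_ne hk]
  rw [limsupPenalty, limsupPenalty, limsup_congr hlimsup, tsum_congr hterms,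
    hx.tsum_add (hasSum_pi_single n _).summable, tsum_pi_single, add_assoc]

theorem hasDerivAt_add_smul_single {x : ℕ → ℝ}
    (hx : Summable fun k => w k * (x k ^ 2 - 2 * x k)) (n : ℕ) :
    HasDerivAt (fun t : ℝ => limsupPenalty w (x + t • (Pi.single n 1 : ℕ → ℝ)))
      (w n * (2 * (x n - 1))) 0 := by
  simp_rw [add_smul_single w hx]
  have := ((hasDerivAt_pow 2 (0 : ℝ)).add
    (((hasDerivAt_id (0 : ℝ)).const_mul 2).mul_const (x n - 1))).const_mul (w n)
  simpa using this.const_add (limsupPenalty w x)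

end limsupPenalty

/-- **Example 5.** Let `0 < β < 1` with `∑_{n≥1} β^n < 2`, and on `ℓ∞(ℕ)` let
`g x = limsup |x_n| + ∑_{n≥1} β^n (x_n² − 2 x_n)`.  Then the constant sequence
`𝟙 = (1,1,1,…)` satisfies `g'(𝟙; e_n) = 0` for all `n`, but `𝟙` is not a minimizer of `g` :
indeed `g(1,1,1,…) > g(1/2,1/2,1/2,…)`.
(The index `n : ℕ` of the formalization corresponds to `n+1 ≥ 1` of the statement.) -/
theorem statement16 (β : ℝ) (hβ0 : 0 < β) (hβ1 : β < 1)
    (hβ2 : ∑' n : ℕ, β ^ (n + 1) < 2)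
    (g : lp (fun _ : ℕ => ℝ) ∞ → ℝ)
    (hg : ∀ x : lp (fun _ : ℕ => ℝ) ∞,
      g x = Filter.limsup (fun n : ℕ => |x n|) atTop +
        ∑' n : ℕ, β ^ (n + 1) * ((x n) ^ 2 - 2 * x n))
    (one : lp (fun _ : ℕ => ℝ) ∞) (hone : ∀ n : ℕ, one n = 1)
    (half : lp (fun _ : ℕ => ℝ) ∞) (hhalf : ∀ n : ℕ, half n = 1 / 2) :
    (∀ n : ℕ,
      Tendsto (fun t : ℝ => (g (one + t • lp.single ∞ n (1 : ℝ)) - g one) / t)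
        (𝓝[≠] (0 : ℝ)) (𝓝 (0 : ℝ))) ∧
    ¬ (∀ x : lp (fun _ : ℕ => ℝ) ∞, g one ≤ g x) ∧
    g half < g one := by
  set w : ℕ → ℝ := fun n => β ^ (n + 1)
  have hw : Summable w := by
    simpa [w, pow_succ] using (summable_geometric_of_lt_one hβ0.le hβ1).mul_right β
  have hgw (x : lp (fun _ : ℕ => ℝ) ∞) : g x = limsupPenalty w x := hg x
  have hone' : ⇑one = fun _ => 1 := funext hone
  have hhalf' : ⇑half = fun _ => 1 / 2 := funext hhalf
  have hlt : g half < g one := by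
    rw [hgw, hgw, hone', hhalf', limsupPenalty.apply_const, limsupPenalty.apply_const]
    norm_num
    linarith
  refine ⟨fun n => ?_, fun h => (h half).not_gt hlt, hlt⟩
  have hderiv := (limsupPenalty.hasDerivAt_add_smul_single w
    (x := ⇑one) (by simp only [hone']; exact hw.mul_right _) n).tendsto_slope_zero
  simp only [hone', sub_self, mul_zero, zero_smul, add_zero, zero_add] at hderiv
  refine hderiv.congr fun t => ?_
  rw [hgw, hgw, lp.coeFn_add, lp.coeFn_smul, lp.coeFn_single, hone', div_eq_inv_mul, smul_eq_mul]
end
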